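/- arXiv:2203.04216 — 12 statements merged into one kernel-verified Lean document; each statement's English description precedes it below -/
import Mathlib

section
/- For positive integers i and j, gcd(2^i + 1, 2^j + 1) = 1 if and only if the 2-adic valuations of i and j are different. -/
/-!
If `ord₂ i = ord₂ j = k`, then `i` and `j` are odd multiples of `2 ^ k`, so `2 ^ 2 ^ k + 1 ≥ 3`
divides both `2 ^ i + 1` and `2 ^ j + 1`. Conversely, if a (necessarily odd) prime `p` divides
both, then the order `t` of `2` modulo `p` divides `2m` but not `m` for `m = i, j`, which forces
`ord₂ t = ord₂ i + 1 = ord₂ j + 1`.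
-/

lemma padicValNat_two_pow_mul_of_odd {k m : ℕ} (hm : Odd m) : padicValNat 2 (2 ^ k * m) = k := by
  rw [padicValNat.mul (pow_ne_zero k two_ne_zero) hm.pos.ne', padicValNat.prime_pow,
    padicValNat.eq_zero_of_not_dvd hm.not_two_dvd_nat, add_zero]

lemma pow_two_pow_padicValNat_add_one_dvd (a : ℕ) {n : ℕ} (hn : n ≠ 0) :
    a ^ 2 ^ padicValNat 2 n + 1 ∣ a ^ n + 1 := by
  obtain ⟨k, m, hm, rfl⟩ := Nat.exists_eq_two_pow_mul_odd hn
  rw [padicValNat_two_pow_mul_of_odd hm, pow_mul]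
  simpa only [one_pow] using hm.nat_add_dvd_pow_add_pow (a ^ 2 ^ k) 1

lemma padicValNat_eq_succ_of_dvd_mul_of_not_dvd {p n k : ℕ} [Fact p.Prime] (hk : k ≠ 0)
    (hdvd : n ∣ p * k) (hndvd : ¬ n ∣ k) : padicValNat p n = padicValNat p k + 1 := by
  obtain ⟨t, ht⟩ := hdvd
  have hp : p ≠ 0 := (Fact.out : p.Prime).ne_zero
  have hn : n ≠ 0 := by rintro rfl; simp [hp, hk] at ht
  have ht0 : t ≠ 0 := by rintro rfl; simp [hp, hk] at ht
  have hpt : ¬ p ∣ t := by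
    rintro ⟨s, rfl⟩
    exact hndvd ⟨s, mul_left_cancel₀ hp (by rw [ht]; ring)⟩
  have := congrArg (padicValNat p) ht
  rw [padicValNat.mul hp hk, padicValNat.mul hn ht0, padicValNat.self (Fact.out : p.Prime).one_lt,
    padicValNat.eq_zero_of_not_dvd hpt, add_zero] at this
  omega

lemma padicValNat_two_orderOf_of_pow_eq_neg_one {R : Type*} [Ring R] (hR : (-1 : R) ≠ 1)
    {x : R} {m : ℕ} (hm : m ≠ 0) (hx : x ^ m = -1) :
    padicValNat 2 (orderOf x) = padicValNat 2 m + 1 := by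
  refine padicValNat_eq_succ_of_dvd_mul_of_not_dvd hm (orderOf_dvd_of_pow_eq_one ?_) ?_
  · rw [pow_mul', hx, neg_one_sq]
  · rwa [orderOf_dvd_iff_pow_eq_one, hx]

lemma padicValNat_two_orderOf_two_of_dvd_two_pow_add_one {p m : ℕ} [Fact p.Prime] (hm : m ≠ 0)
    (hp : p ∣ 2 ^ m + 1) : padicValNat 2 (orderOf (2 : ZMod p)) = padicValNat 2 m + 1 := by
  have hpow : (2 : ZMod p) ^ m = -1 := by
    rw [eq_neg_iff_add_eq_zero]
    exact_mod_cast (ZMod.natCast_eq_zero_iff _ p).mpr hp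
  refine padicValNat_two_orderOf_of_pow_eq_neg_one (fun h ↦ ?_) hm hpow
  have h2 : (2 : ZMod p) = 0 := by linear_combination -h
  rw [h2, zero_pow hm, zero_eq_neg] at hpow
  exact one_ne_zero hpow

theorem stmt_0 (i j : ℕ) (hi : 0 < i) (hj : 0 < j) :
    Nat.gcd (2 ^ i + 1) (2 ^ j + 1) = 1 ↔ padicValNat 2 i ≠ padicValNat 2 j := by
  constructor
  · intro hgcd hij
    have hdvd : 2 ^ 2 ^ padicValNat 2 i + 1 ∣ Nat.gcd (2 ^ i + 1) (2 ^ j + 1) := by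
      refine Nat.dvd_gcd (pow_two_pow_padicValNat_add_one_dvd 2 hi.ne') ?_
      simpa only [hij] using pow_two_pow_padicValNat_add_one_dvd 2 hj.ne'
    rw [hgcd, Nat.dvd_one] at hdvd
    have := Nat.one_lt_two_pow (pow_ne_zero (padicValNat 2 i) two_ne_zero)
    omega
  · contrapose!
    intro hgcd
    set p := (Nat.gcd (2 ^ i + 1) (2 ^ j + 1)).minFac
    have : Fact p.Prime := ⟨Nat.minFac_prime hgcd⟩
    have hpi : p ∣ 2 ^ i + 1 := (Nat.minFac_dvd _).trans (Nat.gcd_dvd_left _ _)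
    have hpj : p ∣ 2 ^ j + 1 := (Nat.minFac_dvd _).trans (Nat.gcd_dvd_right _ _)
    have := padicValNat_two_orderOf_two_of_dvd_two_pow_add_one hi.ne' hpi
    have := padicValNat_two_orderOf_two_of_dvd_two_pow_add_one hj.ne' hpj
    omega
end

section
/- Let q be an even prime power, let α ∈ F_{q^2} and β ∈ F_q^*, and set A(X) = αX^2 + βX + α^q. Then the following are equivalent: (1) A has at least one root γ with γ^{q+1} = 1; (2) A has two distinct roots γ with γ^{q+1} = 1; (3) Tr_{F_q/F_2}(α^{q+1}/β^2) = 1. -/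
/-!
Write `c = α^(q+1)/β²`, which lies in `F_q`. The substitution `αγ = βy` turns `A(γ) = 0` into the
Artin–Schreier equation `y² + y = c`, and then `γ^(q+1) = 1` into `y^q = y + 1`. Since the trace
telescopes on `y² + y` to `y^q + y`, a root on the unit circle forces `Tr c = 1`. Conversely, `c ∈ F_q`
has trace `0` down from `F_{q²}`, so `c = y² + y` for some `y ∈ F_{q²}`; then `Tr c = 1` says
`y^q = y + 1`, and `y`, `y + 1` give the two roots `βy/α`, `β(y+1)/α`.
-/

open Finset Polynomial

/-- On a field with `2 ^ n` elements this is the trace down to `𝔽₂`. -/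
def absTrace {R : Type*} [CommSemiring R] (n : ℕ) (x : R) : R :=
  ∑ i ∈ range n, x ^ 2 ^ i

section CharTwo

variable {R : Type*} [CommRing R] [CharP R 2]

theorem absTrace_sq_add_self (n : ℕ) (y : R) : absTrace n (y ^ 2 + y) = y ^ 2 ^ n + y := by
  have telescope (i : ℕ) : (y ^ 2 + y) ^ 2 ^ i = y ^ 2 ^ (i + 1) - y ^ 2 ^ i := by
    rw [add_pow_char_pow, ← pow_mul, ← pow_succ', CharTwo.sub_eq_add]
  simp only [absTrace, telescope]
  rw [sum_range_sub (fun i => y ^ 2 ^ i), pow_zero, pow_one, CharTwo.sub_eq_add]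

theorem absTrace_two_mul {n : ℕ} {x : R} (hx : x ^ 2 ^ n = x) : absTrace (2 * n) x = 0 := by
  have shift (i : ℕ) : x ^ 2 ^ (n + i) = x ^ 2 ^ i := by rw [pow_add, pow_mul, hx]
  simp only [absTrace, two_mul, sum_range_add, shift, CharTwo.add_self_eq_zero]

end CharTwo

theorem card_filter_absTrace_eq_zero_le {K : Type*} [Field K] [Fintype K] [DecidableEq K]
    {n : ℕ} (hn : 0 < n) : #{x : K | absTrace n x = 0} ≤ 2 ^ (n - 1) := by
  set P : K[X] := ∑ i ∈ range n, X ^ 2 ^ i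
  have hP0 : P ≠ 0 := fun h => by
    simpa [P, coeff_X_pow, eq_comm (a := 1), Nat.pow_eq_one, hn] using congr_arg (coeff · 1) h
  have hdeg : P.natDegree ≤ 2 ^ (n - 1) := by
    refine natDegree_sum_le_of_forall_le _ _ fun i hi => ?_
    rw [natDegree_X_pow]
    exact Nat.pow_le_pow_right two_pos (by have := mem_range.1 hi; omega)
  have hsub : ({x | absTrace n x = 0} : Finset K) ⊆ P.roots.toFinset := fun x hx => by
    simpa [mem_roots hP0, P, eval_finsetSum, absTrace] using (mem_filter.1 hx).2
  calc #{x : K | absTrace n x = 0} ≤ #P.roots.toFinset := card_le_card hsub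
    _ ≤ P.natDegree := (Multiset.toFinset_card_le _).trans (card_roots' P)
    _ ≤ 2 ^ (n - 1) := hdeg

section ArtinSchreier

variable {K : Type*} [Field K] [CharP K 2]

theorem sq_add_self_eq_sq_add_self_iff {y z : K} : z ^ 2 + z = y ^ 2 + y ↔ z = y ∨ z = y + 1 := by
  have factor : (z + y) * (z + y + 1) = (z ^ 2 + z) + (y ^ 2 + y) := by
    linear_combination (z * y) * CharP.cast_eq_zero K 2
  rw [← CharTwo.add_eq_zero, ← factor, mul_eq_zero, add_assoc z y 1, CharTwo.add_eq_zero,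
    CharTwo.add_eq_zero]

theorem card_le_two_mul_card_image_sq_add_self [Fintype K] [DecidableEq K] :
    Fintype.card K ≤ 2 * #(univ.image fun y : K => y ^ 2 + y) := by
  refine card_le_mul_card_image univ 2 fun b hb => ?_
  obtain ⟨y, -, rfl⟩ := mem_image.1 hb
  calc #{z ∈ univ | z ^ 2 + z = y ^ 2 + y} ≤ #{y, y + 1} :=
        card_le_card fun z hz => by
          simpa [sq_add_self_eq_sq_add_self_iff] using hz
    _ ≤ 2 := card_le_two

/-- `y ↦ y² + y` is two-to-one, so its image has `2 ^ (n - 1)` elements and fills the zero set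
of `absTrace n`. -/
theorem exists_sq_add_self_eq [Fintype K] {n : ℕ} (hcard : Fintype.card K = 2 ^ n) {c : K}
    (hc : absTrace n c = 0) : ∃ y, y ^ 2 + y = c := by
  classical
  have hn : 0 < n := Nat.pos_of_ne_zero <| by
    rintro rfl
    simpa [hcard] using Fintype.one_lt_card (α := K)
  have himage : univ.image (fun y : K => y ^ 2 + y) ⊆ ({x | absTrace n x = 0} : Finset K) := by
    simp only [subset_iff, mem_image, mem_filter, mem_univ, true_and, forall_exists_index]
    rintro _ y rfl
    rw [absTrace_sq_add_self, ← hcard, FiniteField.pow_card, CharTwo.add_self_eq_zero]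
  have heq := eq_of_subset_of_card_le himage <| by
    have hzeros := card_filter_absTrace_eq_zero_le (K := K) hn
    have himage_card := card_le_two_mul_card_image_sq_add_self (K := K)
    rw [hcard, ← Nat.two_pow_pred_add_two_pow_pred hn] at himage_card
    omega
  have hc' : c ∈ univ.image (fun y : K => y ^ 2 + y) := by
    rw [heq]; simpa using hc
  simpa using hc'

end ArtinSchreier

section QuadraticOnUnitCircle

variable {F : Type*} [Field F] {q : ℕ} {α β γ y : F}

theorem root_iff_sq_add_self_eq [CharP F 2] (hα : α ≠ 0) (hβ : β ≠ 0) (hαγ : α * γ = β * y) :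
    α * γ ^ 2 + β * γ + α ^ q = 0 ↔ y ^ 2 + y = α ^ (q + 1) / β ^ 2 := by
  have scaled : α * (α * γ ^ 2 + β * γ + α ^ q) = β ^ 2 * (y ^ 2 + y + α ^ (q + 1) / β ^ 2) := by
    field_simp
    linear_combination (α * γ + β * y + β) * hαγ
  rw [← mul_right_inj' hα, mul_zero, scaled, mul_eq_zero, or_iff_right (pow_ne_zero 2 hβ),
    CharTwo.add_eq_zero]

theorem pow_succ_eq_one_iff (hα : α ≠ 0) (hβ : β ≠ 0) (hβq : β ^ q = β) (hαγ : α * γ = β * y)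
    (hy : y ^ 2 + y = α ^ (q + 1) / β ^ 2) : γ ^ (q + 1) = 1 ↔ y ^ q = y + 1 := by
  have hy0 : y ≠ 0 := by
    rintro rfl
    exact div_ne_zero (pow_ne_zero _ hα) (pow_ne_zero 2 hβ) (by rw [← hy]; ring)
  have norm : α ^ (q + 1) * γ ^ (q + 1) = β ^ 2 * (y ^ q * y) := by
    rw [← mul_pow, hαγ, mul_pow, pow_succ, pow_succ, hβq]; ring
  rw [← mul_right_inj' (pow_ne_zero (q + 1) hα), norm, mul_one, mul_comm,
    ← eq_div_iff (pow_ne_zero 2 hβ), ← hy, show y ^ 2 + y = (y + 1) * y by ring,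
    mul_left_inj' hy0]

theorem root_and_pow_succ_eq_one_iff [CharP F 2] (hα : α ≠ 0) (hβ : β ≠ 0) (hβq : β ^ q = β)
    (hαγ : α * γ = β * y) :
    (α * γ ^ 2 + β * γ + α ^ q = 0 ∧ γ ^ (q + 1) = 1) ↔
      (y ^ 2 + y = α ^ (q + 1) / β ^ 2 ∧ y ^ q = y + 1) := by
  rw [root_iff_sq_add_self_eq hα hβ hαγ]
  exact and_congr_right (pow_succ_eq_one_iff hα hβ hβq hαγ)

variable [CharP F 2] {k : ℕ}

theorem absTrace_eq_one_of_root (hβ : β ≠ 0) (hβq : β ^ 2 ^ k = β)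
    (hroot : α * γ ^ 2 + β * γ + α ^ 2 ^ k = 0) (hγ : γ ^ (2 ^ k + 1) = 1) :
    absTrace k (α ^ (2 ^ k + 1) / β ^ 2) = 1 := by
  have hα : α ≠ 0 := by
    rintro rfl
    have hγ0 : γ = 0 := by simpa [hβ] using hroot
    simp [hγ0] at hγ
  obtain ⟨hy, hyq⟩ := (root_and_pow_succ_eq_one_iff (y := α * γ / β) hα hβ hβq
    (by field_simp)).1 ⟨hroot, hγ⟩
  rw [← hy, absTrace_sq_add_self, hyq, add_right_comm, CharTwo.add_self_eq_zero, zero_add]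

theorem exists_two_roots_of_absTrace_eq_one [Fintype F] (hcard : Fintype.card F = (2 ^ k) ^ 2)
    (hβ : β ≠ 0) (hβq : β ^ 2 ^ k = β) (htr : absTrace k (α ^ (2 ^ k + 1) / β ^ 2) = 1) :
    ∃ γ₁ γ₂ : F, γ₁ ≠ γ₂ ∧ (α * γ₁ ^ 2 + β * γ₁ + α ^ 2 ^ k = 0 ∧ γ₁ ^ (2 ^ k + 1) = 1) ∧
        (α * γ₂ ^ 2 + β * γ₂ + α ^ 2 ^ k = 0 ∧ γ₂ ^ (2 ^ k + 1) = 1) := by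
  have hα : α ≠ 0 := by
    rintro rfl
    simp [absTrace] at htr
  have hc : (α ^ (2 ^ k + 1) / β ^ 2) ^ 2 ^ k = α ^ (2 ^ k + 1) / β ^ 2 := by
    have hαq : α ^ (2 ^ k * 2 ^ k) = α := by rw [← sq, ← hcard, FiniteField.pow_card]
    rw [div_pow, ← pow_mul α, add_one_mul, pow_add, hαq, ← pow_succ', pow_right_comm β, hβq]
  obtain ⟨y, hy⟩ := exists_sq_add_self_eq (by rw [hcard, ← pow_mul, mul_comm]) (absTrace_two_mul hc)
  have hyq : y ^ 2 ^ k = y + 1 := by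
    rw [← hy, absTrace_sq_add_self] at htr
    linear_combination htr - y * CharP.cast_eq_zero F 2
  have hy' : (y + 1) ^ 2 + (y + 1) = α ^ (2 ^ k + 1) / β ^ 2 := by
    linear_combination hy + (y + 1) * CharP.cast_eq_zero F 2
  have hyq' : (y + 1) ^ 2 ^ k = y + 1 + 1 := by rw [add_pow_char_pow, one_pow, hyq]
  refine ⟨β * y / α, β * (y + 1) / α, ?_,
    (root_and_pow_succ_eq_one_iff hα hβ hβq (by field_simp)).2 ⟨hy, hyq⟩,
    (root_and_pow_succ_eq_one_iff hα hβ hβq (by field_simp)).2 ⟨hy', hyq'⟩⟩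
  rw [Ne, div_left_inj' hα, mul_right_inj' hβ]
  simp

end QuadraticOnUnitCircle

/-- Lemma 2.3: for `q` even, `A(X) = αX² + βX + α^q` with `β ∈ F_q^*`, the following are
equivalent: (1) `A` has a root in `μ_{q+1}`, (2) `A` has two distinct roots in `μ_{q+1}`,
(3) `Tr_{F_q/F_2}(α^{q+1}/β²) = 1`. -/
theorem stmt_3 (k : ℕ) (hk : 0 < k) (q : ℕ) (hq : q = 2 ^ k)
    (F : Type) [Field F] [Fintype F] (hF : Fintype.card F = q ^ 2)
    (α β : F) (hβ0 : β ≠ 0) (hβq : β ^ q = β) :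
    ((∃ γ : F, α * γ ^ 2 + β * γ + α ^ q = 0 ∧ γ ^ (q + 1) = 1) ↔
      ∑ i ∈ Finset.range k, (α ^ (q + 1) / β ^ 2) ^ 2 ^ i = 1) ∧
    ((∃ γ₁ γ₂ : F, γ₁ ≠ γ₂ ∧ (α * γ₁ ^ 2 + β * γ₁ + α ^ q = 0 ∧ γ₁ ^ (q + 1) = 1) ∧
        (α * γ₂ ^ 2 + β * γ₂ + α ^ q = 0 ∧ γ₂ ^ (q + 1) = 1)) ↔
      ∑ i ∈ Finset.range k, (α ^ (q + 1) / β ^ 2) ^ 2 ^ i = 1) := by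
  subst hq
  have : CharP F 2 := ringChar.of_eq <| FiniteField.even_card_iff_char_two.2 <| by
    rw [hF, ← Nat.dvd_iff_mod_eq_zero]
    exact dvd_pow (dvd_pow_self 2 hk.ne') two_ne_zero
  have root_imp_trace : (∃ γ : F, α * γ ^ 2 + β * γ + α ^ 2 ^ k = 0 ∧ γ ^ (2 ^ k + 1) = 1) →
      absTrace k (α ^ (2 ^ k + 1) / β ^ 2) = 1 :=
    fun ⟨γ, hroot, hγ⟩ => absTrace_eq_one_of_root hβ0 hβq hroot hγ
  have trace_imp_two_roots := exists_two_roots_of_absTrace_eq_one (α := α) hF hβ0 hβq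
  exact ⟨⟨root_imp_trace, fun h => let ⟨γ, _, _, h₁, _⟩ := trace_imp_two_roots h; ⟨γ, h₁⟩⟩,
    ⟨fun ⟨_, γ₂, _, _, h₂⟩ => root_imp_trace ⟨γ₂, h₂⟩, trace_imp_two_roots⟩⟩
end

section
/- Let q be a prime power, r a positive integer, and A(X) ∈ F_{q^2}[X]. Then the polynomial f(X) = X^r · A(X^{q-1}) permutes F_{q^2} if and only if gcd(r, q-1) = 1 and g_0(X) = X^r · A(X)^{q-1} permutes the set μ_{q+1} of (q+1)-th roots of unity in F_{q^2}. -/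
/-! For `s * t = #F - 1`, the map `x ↦ x ^ s` sends `Fˣ` onto the `t`-th roots of unity and
intertwines `f x = x ^ r * A (x ^ s)` with `g y = y ^ r * A y ^ s`, since `f x ^ s = g (x ^ s)`.
Hence `f` permutes `F` iff `g` permutes `μ_t` and `f` is injective on each fibre `x • μ_s`; as
`f (ζ x) = ζ ^ r f x` for `ζ ∈ μ_s`, the latter says exactly that `gcd r s = 1`. -/

open Polynomial Function Set

theorem IsCyclic.range_powMonoidHom_eq_ker_of_card_eq_mul {G : Type*} [CommGroup G] [IsCyclic G]
    [Finite G] {s t : ℕ} (hst : Nat.card G = s * t) :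
    (powMonoidHom s : G →* G).range = (powMonoidHom t).ker := by
  have hs : s ≠ 0 := by
    rintro rfl
    simp [Nat.card_pos.ne'] at hst
  refine Subgroup.eq_of_le_of_card_ge ?_ ?_
  · rintro _ ⟨x, rfl⟩
    simp [← pow_mul, ← hst, pow_card_eq_one']
  · rw [card_powMonoidHom_ker, card_powMonoidHom_range, hst, Nat.gcd_mul_left_left,
      Nat.gcd_mul_right_left, Nat.mul_div_cancel_left _ (Nat.pos_of_ne_zero hs)]

theorem eq_of_pow_eq_pow_of_coprime {M₀ : Type*} [CommGroupWithZero M₀] {r s : ℕ} {x y : M₀}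
    (hy : y ≠ 0) (hrs : r.Coprime s) (hr : x ^ r = y ^ r) (hs : x ^ s = y ^ s) : x = y := by
  have : (x / y) ^ r.gcd s = 1 :=
    pow_gcd_eq_one.mpr ⟨by rw [div_pow, hr, div_self (pow_ne_zero _ hy)],
      by rw [div_pow, hs, div_self (pow_ne_zero _ hy)]⟩
  rwa [hrs, pow_one, div_eq_one_iff_eq hy] at this

theorem Polynomial.pow_mul_eval_pow_pow {R : Type*} [CommSemiring R] (A : R[X]) (r s : ℕ)
    (x : R) : (x ^ r * A.eval (x ^ s)) ^ s = (x ^ s) ^ r * A.eval (x ^ s) ^ s := by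
  rw [mul_pow, pow_right_comm]

namespace FiniteField

variable {F : Type*} [Field F] [Fintype F] {s t : ℕ}

theorem card_sub_one_ne_zero : Fintype.card F - 1 ≠ 0 :=
  Nat.sub_ne_zero_of_lt Fintype.one_lt_card

theorem pow_pow_eq_one_of_mul_eq (hst : s * t = Fintype.card F - 1) {x : F} (hx : x ≠ 0) :
    (x ^ s) ^ t = 1 := by
  rw [← pow_mul, hst, pow_card_sub_one_eq_one x hx]

theorem exists_pow_eq_of_pow_eq_one (hst : s * t = Fintype.card F - 1) {y : F} (hy : y ^ t = 1) :
    ∃ x ≠ 0, x ^ s = y := by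
  have ht : t ≠ 0 := right_ne_zero_of_mul (hst ▸ card_sub_one_ne_zero)
  have hy0 : y ≠ 0 := by
    rintro rfl
    simp [ht] at hy
  have hmem : Units.mk0 y hy0 ∈ (powMonoidHom t : Fˣ →* Fˣ).ker := by
    simp [Units.ext_iff, hy]
  rw [← IsCyclic.range_powMonoidHom_eq_ker_of_card_eq_mul (s := s)
    (by rw [Nat.card_units, Nat.card_eq_fintype_card, hst])] at hmem
  obtain ⟨x, hx⟩ := hmem
  exact ⟨x, x.ne_zero, by simpa [Units.ext_iff] using hx⟩

variable {r : ℕ} {A : F[X]}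

theorem coprime_of_injective_pow_mul_eval_pow (hs : s ∣ Fintype.card F - 1)
    (hf : Injective fun x : F => x ^ r * A.eval (x ^ s)) : r.Coprime s := by
  classical
  by_contra hrs
  obtain ⟨ℓ, hℓ, hℓrs⟩ := Nat.exists_prime_and_dvd hrs
  have : Fact ℓ.Prime := ⟨hℓ⟩
  obtain ⟨c, hc⟩ := exists_prime_orderOf_dvd_card (G := Fˣ) ℓ
    ((hℓrs.trans (Nat.gcd_dvd_right r s)).trans (by rwa [Fintype.card_units]))
  have hcr : (c : F) ^ r = 1 := by
    rw [← Units.val_pow_eq_pow_val, orderOf_dvd_iff_pow_eq_one.mp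
      (hc ▸ hℓrs.trans (Nat.gcd_dvd_left r s)), Units.val_one]
  have hcs : (c : F) ^ s = 1 := by
    rw [← Units.val_pow_eq_pow_val, orderOf_dvd_iff_pow_eq_one.mp
      (hc ▸ hℓrs.trans (Nat.gcd_dvd_right r s)), Units.val_one]
  have hc1 : (c : F) = 1 := hf (by simp only [hcr, hcs, one_pow])
  exact hℓ.one_lt.ne' (by rw [← hc, orderOf_eq_one_iff, Units.ext_iff, hc1, Units.val_one])

theorem bijOn_of_bijective_pow_mul_eval_pow (hst : s * t = Fintype.card F - 1) (hr : r ≠ 0)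
    (hf : Bijective fun x : F => x ^ r * A.eval (x ^ s)) :
    BijOn (fun y : F => y ^ r * A.eval y ^ s) {y | y ^ t = 1} {y | y ^ t = 1} := by
  have hf0 : ∀ x : F, x ^ r * A.eval (x ^ s) = 0 → x = 0 := fun x hx =>
    hf.injective (show x ^ r * A.eval (x ^ s) = 0 ^ r * A.eval (0 ^ s) by simp [hx, hr])
  have hmaps : MapsTo (fun y : F => y ^ r * A.eval y ^ s) {y | y ^ t = 1} {y | y ^ t = 1} := by
    intro y hy
    obtain ⟨x, hx, rfl⟩ := exists_pow_eq_of_pow_eq_one hst hy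
    have := pow_pow_eq_one_of_mul_eq hst (mt (hf0 x) hx)
    rwa [A.pow_mul_eval_pow_pow] at this
  refine ((toFinite _).surjOn_iff_bijOn_of_mapsTo hmaps).mp fun z hz => ?_
  obtain ⟨w, hw, rfl⟩ := exists_pow_eq_of_pow_eq_one hst hz
  obtain ⟨x, rfl⟩ := hf.surjective w
  have hx : x ≠ 0 := by
    rintro rfl
    simp [hr] at hw
  exact ⟨x ^ s, pow_pow_eq_one_of_mul_eq hst hx, (A.pow_mul_eval_pow_pow r s x).symm⟩

theorem bijective_pow_mul_eval_pow_of_bijOn (hst : s * t = Fintype.card F - 1) (hr : r ≠ 0)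
    (hrs : r.Coprime s)
    (hg : BijOn (fun y : F => y ^ r * A.eval y ^ s) {y | y ^ t = 1} {y | y ^ t = 1}) :
    Bijective fun x : F => x ^ r * A.eval (x ^ s) := by
  have hst0 : s * t ≠ 0 := hst ▸ card_sub_one_ne_zero
  have hA : ∀ x : F, x ≠ 0 → A.eval (x ^ s) ≠ 0 := fun x hx hA0 => by
    have := hg.mapsTo (pow_pow_eq_one_of_mul_eq hst hx)
    simp [hA0, left_ne_zero_of_mul hst0, right_ne_zero_of_mul hst0] at this
  have hf0 : ∀ x : F, x ^ r * A.eval (x ^ s) = 0 ↔ x = 0 := fun x => by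
    by_cases hx : x = 0
    · simp [hx, hr]
    · simp [hx, hA x hx]
  rw [← Finite.injective_iff_bijective]
  intro x y (hxy : x ^ r * A.eval (x ^ s) = y ^ r * A.eval (y ^ s))
  by_cases hx : x = 0
  · rwa [hx, eq_comm, ← hf0, ← hxy, hf0]
  have hy : y ≠ 0 := fun hy => hx ((hf0 x).mp (hxy.trans ((hf0 y).mpr hy)))
  have hxs : x ^ s = y ^ s := by
    refine hg.injOn (pow_pow_eq_one_of_mul_eq hst hx) (pow_pow_eq_one_of_mul_eq hst hy) ?_
    simp only [← A.pow_mul_eval_pow_pow, hxy]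
  have hxr : x ^ r = y ^ r := by
    simp only [hxs] at hxy
    exact mul_right_cancel₀ (hA y hy) hxy
  exact eq_of_pow_eq_pow_of_coprime hy hrs hxr hxs

theorem bijective_pow_mul_eval_pow_iff (hst : s * t = Fintype.card F - 1) (hr : r ≠ 0) :
    Bijective (fun x : F => x ^ r * A.eval (x ^ s)) ↔
      r.Coprime s ∧ BijOn (fun y : F => y ^ r * A.eval y ^ s) {y | y ^ t = 1} {y | y ^ t = 1} :=
  ⟨fun hf => ⟨coprime_of_injective_pow_mul_eval_pow (Dvd.intro t hst) hf.injective,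
      bijOn_of_bijective_pow_mul_eval_pow hst hr hf⟩,
    fun ⟨hrs, hg⟩ => bijective_pow_mul_eval_pow_of_bijOn hst hr hrs hg⟩

end FiniteField

theorem stmt_4_general (q : ℕ)
    (F : Type) [Field F] [Fintype F] (hF : Fintype.card F = q ^ 2)
    (r : ℕ) (hr : 0 < r) (A : Polynomial F) :
    Function.Bijective (fun x : F => x ^ r * A.eval (x ^ (q - 1))) ↔
      (Nat.gcd r (q - 1) = 1 ∧
        Set.BijOn (fun x : F => x ^ r * (A.eval x) ^ (q - 1))
          {x : F | x ^ (q + 1) = 1} {x : F | x ^ (q + 1) = 1}) := by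
  have hq : (q - 1) * (q + 1) = Fintype.card F - 1 := by
    rw [hF, mul_comm, ← Nat.sq_sub_sq, one_pow]
  exact FiniteField.bijective_pow_mul_eval_pow_iff hq hr.ne'

/-- Lemma 2.7: `X^r A(X^{q-1})` permutes `F_{q²}` iff `gcd(r, q-1) = 1` and
`X^r A(X)^{q-1}` permutes the `(q+1)`-th roots of unity. -/
theorem stmt_4 (p n : ℕ) (hp : p.Prime) (hn : 0 < n) (q : ℕ) (hq : q = p ^ n)
    (F : Type) [Field F] [Fintype F] (hF : Fintype.card F = q ^ 2)
    (r : ℕ) (hr : 0 < r) (A : Polynomial F) :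
    Function.Bijective (fun x : F => x ^ r * A.eval (x ^ (q - 1))) ↔
      (Nat.gcd r (q - 1) = 1 ∧
        Set.BijOn (fun x : F => x ^ r * (A.eval x) ^ (q - 1))
          {x : F | x ^ (q + 1) = 1} {x : F | x ^ (q + 1) = 1}) :=
  stmt_4_general q F hF r hr A
end

section
/- A degree-one rational function ρ(X) ∈ F_{q^2}(X) permutes μ_{q+1} if and only if ρ(X) = (β^q X + α^q)/(α X + β) for some α, β ∈ F_{q^2} with α^{q+1} ≠ β^{q+1}. -/
/-!
Write `x̄ = x ^ q` (the Frobenius of `F_{q²}/F_q`) and `N x = x x̄ = x ^ (q + 1)`, so that `μ_{q+1}`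
is the circle `N x = 1`, on which `x̄ = x⁻¹`. For `x ∈ μ_{q+1}`, `ρ x ∈ μ_{q+1}` says
`N (a x + b) = N (c x + d)`; multiplied by `x` this becomes a quadratic equation in `x`, and since
`μ_{q+1}` has `q + 1 ≥ 3` elements its coefficients vanish: `a b̄ = c d̄` and
`N a + N b = N c + N d`. With `ad ≠ bc` this forces `N a = N d`, `N b = N c ≠ N d` and
`(d̄, c̄) = m (a, b)` for some `m` with `N m = 1`; Hilbert 90 gives `m = l ^ (q - 1)`, and then
`α = c / l`, `β = d / l`. Conversely a map of the stated form preserves `N` on `μ_{q+1}`, and an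
injective self-map of a finite set is a bijection.
-/

open Set

section Field

variable {K : Type*} [Field K]

theorem eq_zero_of_quadratic_eq_zero {A B C x y z : K} (hxy : x ≠ y) (hxz : x ≠ z) (hyz : y ≠ z)
    (hx : A * x ^ 2 + B * x + C = 0) (hy : A * y ^ 2 + B * y + C = 0)
    (hz : A * z ^ 2 + B * z + C = 0) : A = 0 ∧ B = 0 ∧ C = 0 := by
  have hxy' : A * (x + y) + B = 0 :=
    (mul_eq_zero.mp (by linear_combination hx - hy : (x - y) * (A * (x + y) + B) = 0)).resolve_left
      (sub_ne_zero.mpr hxy)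
  have hxz' : A * (x + z) + B = 0 :=
    (mul_eq_zero.mp (by linear_combination hx - hz : (x - z) * (A * (x + z) + B) = 0)).resolve_left
      (sub_ne_zero.mpr hxz)
  have hA : A = 0 :=
    (mul_eq_zero.mp (by linear_combination hxy' - hxz' : A * (y - z) = 0)).resolve_right
      (sub_ne_zero.mpr hyz)
  have hB : B = 0 := by linear_combination hxy' - (x + y) * hA
  exact ⟨hA, hB, by linear_combination hx - x ^ 2 * hA - x * hB⟩

theorem injOn_linearFractional {a b c d : K} (hdet : a * d - b * c ≠ 0) :
    InjOn (fun x ↦ (a * x + b) / (c * x + d)) {x | c * x + d ≠ 0} := by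
  intro x hx y hy hxy
  rw [div_eq_div_iff hx hy] at hxy
  have h : (a * d - b * c) * (x - y) = 0 := by linear_combination hxy
  exact sub_eq_zero.mp ((mul_eq_zero.mp h).resolve_left hdet)

theorem exists_pow_eq_one_mul_eq {k : ℕ} {u v u' v' : K} (hu : u ≠ 0) (h : u * v' = v * u')
    (hN : u' ^ k = u ^ k) : ∃ m : K, m ^ k = 1 ∧ m * u = u' ∧ m * v = v' := by
  refine ⟨u' / u, ?_, div_mul_cancel₀ u' hu, ?_⟩
  · rw [div_pow, hN, div_self (pow_ne_zero k hu)]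
  · rw [div_mul_eq_mul_div, div_eq_iff hu]
    linear_combination -h

variable {q : ℕ} {a b c d : K}

theorem pow_succ_eq_of_mul_pow_eq (hdet : a * d - b * c ≠ 0)
    (h₁ : a * b ^ q = c * d ^ q) (h₂ : a ^ (q + 1) + b ^ (q + 1) = c ^ (q + 1) + d ^ (q + 1))
    (h₃ : a ^ q * b = c ^ q * d) :
    a ^ (q + 1) = d ^ (q + 1) ∧ b ^ (q + 1) = c ^ (q + 1) ∧ c ^ (q + 1) ≠ d ^ (q + 1) := by
  have hac : a ^ (q + 1) ≠ c ^ (q + 1) := by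
    intro h
    have hc : c = 0 := by
      refine eq_zero_of_pow_eq_zero (n := q) ((mul_eq_zero.mp ?_).resolve_right hdet)
      linear_combination -a * h₃ + b * h
    have ha : a = 0 := eq_zero_of_pow_eq_zero (n := q + 1) (by rw [h, hc, zero_pow q.succ_ne_zero])
    exact hdet (by rw [ha, hc]; ring)
  have had : a ^ (q + 1) = d ^ (q + 1) := by
    have h : (a ^ (q + 1) - c ^ (q + 1)) * (a ^ (q + 1) - d ^ (q + 1)) = 0 := by
      linear_combination a ^ (q + 1) * h₂ - (a ^ q * b) * h₁ - (c * d ^ q) * h₃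
    exact sub_eq_zero.mp ((mul_eq_zero.mp h).resolve_left (sub_ne_zero.mpr hac))
  exact ⟨had, by linear_combination h₂ - had, fun h ↦ hac (had.trans h.symm)⟩

theorem mul_pow_eq_of_pow_succ_eq (hq : q ≠ 0) (h₃ : a ^ q * b = c ^ q * d)
    (had : a ^ (q + 1) = d ^ (q + 1)) : a * c ^ q = b * d ^ q := by
  by_cases ha : a = 0
  · have hd : d = 0 := eq_zero_of_pow_eq_zero (n := q + 1) (by rw [← had, ha, zero_pow q.succ_ne_zero])
    rw [ha, hd, zero_pow hq]; ring
  · have h : a ^ q * (a * c ^ q - b * d ^ q) = 0 := by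
      linear_combination -d ^ q * h₃ + c ^ q * had
    exact sub_eq_zero.mp ((mul_eq_zero.mp h).resolve_left (pow_ne_zero q ha))

end Field

theorem IsCyclic.range_powMonoidHom_eq_ker {G : Type*} [CommGroup G] [IsCyclic G] [Finite G]
    {k m : ℕ} (h : Nat.card G = k * m) :
    (powMonoidHom k : G →* G).range = (powMonoidHom m).ker := by
  have hk : k ≠ 0 := by rintro rfl; exact Nat.card_pos.ne' (h.trans (zero_mul m))
  refine Subgroup.eq_of_le_of_card_ge ?_ ?_
  · rintro _ ⟨x, rfl⟩
    simp [← pow_mul, ← h, pow_card_eq_one']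
  · rw [IsCyclic.card_powMonoidHom_ker, IsCyclic.card_powMonoidHom_range, h,
      Nat.gcd_eq_right (dvd_mul_left m k), Nat.gcd_eq_right (dvd_mul_right k m),
      Nat.mul_div_cancel_left m (Nat.pos_of_ne_zero hk)]

section CardSq

variable {F : Type*} [Field F] [Fintype F] {q : ℕ}

theorem two_le_of_card_eq_sq (hF : Fintype.card F = q ^ 2) : 2 ≤ q := by
  have h := Fintype.one_lt_card (α := F)
  rw [hF] at h
  by_contra! hq
  interval_cases q <;> simp at h

theorem add_pow_of_card_eq_sq (hF : Fintype.card F = q ^ 2) (x y : F) :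
    (x + y) ^ q = x ^ q + y ^ q := by
  obtain ⟨p, hchar, n, hp, hcard⟩ := FiniteField.card' F
  obtain ⟨m, -, rfl⟩ := (Nat.dvd_prime_pow hp).mp (hcard ▸ hF ▸ Dvd.intro q (sq q).symm)
  have : Fact p.Prime := ⟨hp⟩
  exact add_pow_char_pow x y p m

theorem pow_pow_of_card_eq_sq (hF : Fintype.card F = q ^ 2) (x : F) : (x ^ q) ^ q = x := by
  rw [← pow_mul, ← sq, ← hF, FiniteField.pow_card]

theorem neg_one_pow_succ_of_card_eq_sq (hF : Fintype.card F = q ^ 2) : (-1 : F) ^ (q + 1) = 1 := by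
  have h := add_pow_of_card_eq_sq hF 1 (-1)
  rw [add_neg_cancel, one_pow, zero_pow (by have := two_le_of_card_eq_sq hF; omega)] at h
  rw [pow_succ, ← neg_eq_of_add_eq_zero_right h.symm, neg_mul_neg, one_mul]

theorem pow_pow_succ_of_card_eq_sq (hF : Fintype.card F = q ^ 2) (x : F) :
    (x ^ q) ^ (q + 1) = x ^ (q + 1) := by
  rw [pow_succ, pow_pow_of_card_eq_sq hF, pow_succ', mul_comm]

theorem mul_linear_pow_succ_of_card_eq_sq (hF : Fintype.card F = q ^ 2) {x : F}
    (hx : x ^ (q + 1) = 1) (a b : F) :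
    x * (a * x + b) ^ (q + 1) = a * b ^ q * x ^ 2 + (a ^ (q + 1) + b ^ (q + 1)) * x + a ^ q * b := by
  rw [pow_succ, add_pow_of_card_eq_sq hF, mul_pow]
  linear_combination (a ^ q * (a * x + b)) * hx

theorem card_units_of_card_eq_sq (hF : Fintype.card F = q ^ 2) :
    Nat.card Fˣ = (q - 1) * (q + 1) := by
  classical
  rw [Nat.card_eq_fintype_card, Fintype.card_units, hF, mul_comm, ← Nat.sq_sub_sq, one_pow]

theorem exists_three_pow_succ_eq_one (hF : Fintype.card F = q ^ 2) :
    ∃ x y z : F, x ^ (q + 1) = 1 ∧ y ^ (q + 1) = 1 ∧ z ^ (q + 1) = 1 ∧ x ≠ y ∧ x ≠ z ∧ y ≠ z := by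
  classical
  have hcard : 2 < Fintype.card (powMonoidHom (q + 1) : Fˣ →* Fˣ).ker := by
    rw [← Nat.card_eq_fintype_card, IsCyclic.card_powMonoidHom_ker, card_units_of_card_eq_sq hF,
      Nat.gcd_eq_right (dvd_mul_left _ _)]
    have := two_le_of_card_eq_sq hF
    omega
  obtain ⟨⟨x, hx⟩, ⟨y, hy⟩, ⟨z, hz⟩, hxy, hxz, hyz⟩ := Fintype.two_lt_card_iff.mp hcard
  simp only [MonoidHom.mem_ker, powMonoidHom_apply, Units.ext_iff, Units.val_pow_eq_pow_val,
    Units.val_one] at hx hy hz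
  simp only [ne_eq, Subtype.mk.injEq, Units.ext_iff] at hxy hxz hyz
  exact ⟨x, y, z, hx, hy, hz, hxy, hxz, hyz⟩

/-- Hilbert 90 for `F_{q²}/F_q`. -/
theorem exists_pow_sub_one_eq_of_card_eq_sq (hF : Fintype.card F = q ^ 2) {m : F}
    (hm : m ^ (q + 1) = 1) : ∃ l : F, l ≠ 0 ∧ l ^ (q - 1) = m := by
  have hm₀ : m ≠ 0 := by rintro rfl; simp at hm
  have hker : Units.mk0 m hm₀ ∈ (powMonoidHom (q + 1) : Fˣ →* Fˣ).ker := by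
    simp [Units.ext_iff, hm]
  rw [← IsCyclic.range_powMonoidHom_eq_ker (card_units_of_card_eq_sq hF)] at hker
  obtain ⟨l, hl⟩ := hker
  exact ⟨l, l.ne_zero, by simpa [Units.ext_iff] using hl⟩

theorem mul_pow_eq_of_mapsTo (hF : Fintype.card F = q ^ 2) {a b c d : F}
    (hden : ∀ x : F, x ^ (q + 1) = 1 → c * x + d ≠ 0)
    (hmaps : MapsTo (fun x ↦ (a * x + b) / (c * x + d)) {x | x ^ (q + 1) = 1}
      {x | x ^ (q + 1) = 1}) :
    a * b ^ q = c * d ^ q ∧ a ^ (q + 1) + b ^ (q + 1) = c ^ (q + 1) + d ^ (q + 1) ∧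
      a ^ q * b = c ^ q * d := by
  have hquad : ∀ x : F, x ^ (q + 1) = 1 → (a * b ^ q - c * d ^ q) * x ^ 2 +
      (a ^ (q + 1) + b ^ (q + 1) - (c ^ (q + 1) + d ^ (q + 1))) * x + (a ^ q * b - c ^ q * d) = 0 := by
    intro x hx
    have h : (a * x + b) ^ (q + 1) = (c * x + d) ^ (q + 1) := by
      have := hmaps hx
      rwa [mem_ofPred_eq, div_pow, div_eq_one_iff_eq (pow_ne_zero _ (hden x hx))] at this
    linear_combination x * h - mul_linear_pow_succ_of_card_eq_sq hF hx a b +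
      mul_linear_pow_succ_of_card_eq_sq hF hx c d
  obtain ⟨x, y, z, hx, hy, hz, hxy, hxz, hyz⟩ := exists_three_pow_succ_eq_one hF
  obtain ⟨h₁, h₂, h₃⟩ :=
    eq_zero_of_quadratic_eq_zero hxy hxz hyz (hquad x hx) (hquad y hy) (hquad z hz)
  exact ⟨by linear_combination h₁, by linear_combination h₂, by linear_combination h₃⟩

theorem exists_eq_conj_form_of_mul_pow_eq (hF : Fintype.card F = q ^ 2) {a b c d : F}
    (hdet : a * d - b * c ≠ 0) (h₁ : a * b ^ q = c * d ^ q)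
    (h₂ : a ^ (q + 1) + b ^ (q + 1) = c ^ (q + 1) + d ^ (q + 1)) (h₃ : a ^ q * b = c ^ q * d) :
    ∃ α β : F, α ^ (q + 1) ≠ β ^ (q + 1) ∧
      ∃ l : F, l ≠ 0 ∧ a = l * β ^ q ∧ b = l * α ^ q ∧ c = l * α ∧ d = l * β := by
  have hq := two_le_of_card_eq_sq hF
  obtain ⟨had, hbc, hcd⟩ := pow_succ_eq_of_mul_pow_eq hdet h₁ h₂ h₃
  have hprop := mul_pow_eq_of_pow_succ_eq (by omega) h₃ had
  obtain ⟨m, hm, hma, hmb⟩ : ∃ m : F, m ^ (q + 1) = 1 ∧ m * a = d ^ q ∧ m * b = c ^ q := by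
    by_cases ha : a = 0
    · have hb : b ≠ 0 := by rintro rfl; exact hdet (by rw [ha]; ring)
      obtain ⟨m, hm, hmb, hma⟩ := exists_pow_eq_one_mul_eq hb hprop.symm
        (by rw [pow_pow_succ_of_card_eq_sq hF, hbc])
      exact ⟨m, hm, hma, hmb⟩
    · exact exists_pow_eq_one_mul_eq ha hprop (by rw [pow_pow_succ_of_card_eq_sq hF, had])
  obtain ⟨l, hl, rfl⟩ := exists_pow_sub_one_eq_of_card_eq_sq hF hm
  have hlq : l ^ q = l ^ (q - 1) * l := by rw [← pow_succ, Nat.sub_add_cancel (by omega)]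
  refine ⟨c / l, d / l, ?_, l, hl, ?_, ?_, ?_, ?_⟩
  · rwa [div_pow, div_pow, Ne, div_left_inj' (pow_ne_zero _ hl)]
  · rw [div_pow, hlq, ← hma]; field_simp
  · rw [div_pow, hlq, ← hmb]; field_simp
  · field_simp
  · field_simp

theorem linear_ne_zero_of_pow_succ_ne (hF : Fintype.card F = q ^ 2) {α β x : F}
    (hαβ : α ^ (q + 1) ≠ β ^ (q + 1)) (hx : x ^ (q + 1) = 1) : α * x + β ≠ 0 := by
  intro h
  apply hαβ
  rw [show β = -1 * (α * x) by linear_combination h, mul_pow, mul_pow, hx,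
    neg_one_pow_succ_of_card_eq_sq hF, one_mul, mul_one]

theorem conj_linear_pow_succ (hF : Fintype.card F = q ^ 2) {x : F} (hx : x ^ (q + 1) = 1)
    (α β : F) : (β ^ q * x + α ^ q) ^ (q + 1) = (α * x + β) ^ (q + 1) := by
  have hx₀ : x ≠ 0 := by rintro rfl; simp at hx
  apply mul_left_cancel₀ hx₀
  simp only [mul_linear_pow_succ_of_card_eq_sq hF hx, pow_pow_succ_of_card_eq_sq hF,
    pow_pow_of_card_eq_sq hF]
  ring

theorem mapsTo_conj_form (hF : Fintype.card F = q ^ 2) {α β l : F}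
    (hαβ : α ^ (q + 1) ≠ β ^ (q + 1)) (hl : l ≠ 0) :
    MapsTo (fun x ↦ (l * β ^ q * x + l * α ^ q) / (l * α * x + l * β)) {x | x ^ (q + 1) = 1}
      {x | x ^ (q + 1) = 1} := by
  intro x hx
  simp only [mem_ofPred_eq] at hx ⊢
  rw [show l * β ^ q * x + l * α ^ q = l * (β ^ q * x + α ^ q) by ring,
    show l * α * x + l * β = l * (α * x + β) by ring, mul_div_mul_left _ _ hl, div_pow,
    conj_linear_pow_succ hF hx, div_self (pow_ne_zero _ (linear_ne_zero_of_pow_succ_ne hF hαβ hx))]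

end CardSq

theorem stmt_5_general (q : ℕ)
    (F : Type) [Field F] [Fintype F] (hF : Fintype.card F = q ^ 2)
    (a b c d : F) (hdet : a * d - b * c ≠ 0) :
    ((∀ x : F, x ^ (q + 1) = 1 → c * x + d ≠ 0) ∧
      Set.BijOn (fun x : F => (a * x + b) / (c * x + d))
        {x : F | x ^ (q + 1) = 1} {x : F | x ^ (q + 1) = 1}) ↔
    (∃ α β : F, α ^ (q + 1) ≠ β ^ (q + 1) ∧
      ∃ l : F, l ≠ 0 ∧ a = l * β ^ q ∧ b = l * α ^ q ∧ c = l * α ∧ d = l * β) := by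
  constructor
  · rintro ⟨hden, hbij⟩
    obtain ⟨h₁, h₂, h₃⟩ := mul_pow_eq_of_mapsTo hF hden hbij.mapsTo
    exact exists_eq_conj_form_of_mul_pow_eq hF hdet h₁ h₂ h₃
  · rintro ⟨α, β, hαβ, l, hl, rfl, rfl, rfl, rfl⟩
    have hden : ∀ x : F, x ^ (q + 1) = 1 → l * α * x + l * β ≠ 0 := fun x hx ↦ by
      rw [mul_assoc, ← mul_add]
      exact mul_ne_zero hl (linear_ne_zero_of_pow_succ_ne hF hαβ hx)
    have hmaps := mapsTo_conj_form hF hαβ hl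
    exact ⟨hden, ((toFinite _).injOn_iff_bijOn_of_mapsTo hmaps).mp
      ((injOn_linearFractional hdet).mono hden)⟩

/-- Lemma 2.5: a degree-one rational function `(aX+b)/(cX+d)` over `F_{q²}` permutes
`μ_{q+1}` iff it equals `(β^q X + α^q)/(αX + β)` for some `α, β` with `α^{q+1} ≠ β^{q+1}`. -/
theorem stmt_5 (p n : ℕ) (hp : p.Prime) (hn : 0 < n) (q : ℕ) (hq : q = p ^ n)
    (F : Type) [Field F] [Fintype F] (hF : Fintype.card F = q ^ 2)
    (a b c d : F) (hdet : a * d - b * c ≠ 0) :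
    ((∀ x : F, x ^ (q + 1) = 1 → c * x + d ≠ 0) ∧
      Set.BijOn (fun x : F => (a * x + b) / (c * x + d))
        {x : F | x ^ (q + 1) = 1} {x : F | x ^ (q + 1) = 1}) ↔
    (∃ α β : F, α ^ (q + 1) ≠ β ^ (q + 1) ∧
      ∃ l : F, l ≠ 0 ∧ a = l * β ^ q ∧ b = l * α ^ q ∧ c = l * α ∧ d = l * β) :=
  stmt_5_general q F hF a b c d hdet
end

section
/- A degree-one rational function ρ(X) ∈ F_{q^2}(X) maps μ_{q+1} onto P^1(F_q) = F_q ∪ {∞} if and only if ρ(X) = (δX + γδ^q)/(X + γ) for some γ ∈ μ_{q+1} and some δ ∈ F_{q^2} \ F_q. -/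
/-!
Let `σ = (·) ^ q`, an involution of `F_{q²}` with fixed field `F_q`, so that
`μ_{q+1} = {x | σ x * x = 1}` and `σ x = x⁻¹` on it. If `ρ = (aX + b)/(cX + d)` maps
`μ_{q+1}` onto `P¹(F_q)`, the value `∞` forces `c ≠ 0` and puts the pole `-γ := -d/c` on
the circle. For `x` on the circle, clearing denominators in `σ (ρ x) = ρ x` and substituting
`σ x = x⁻¹` gives a quadratic equation in `x`; it holds at all `q + 1 ≥ 3` points of the
circle, so its coefficients vanish. The constant one, `σ a * d = b * σ c`, says
`b/c = γ σ(a/c)`: the normal form with `δ = a/c`, and `δ ∉ F_q` because `ad - bc ≠ 0`.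
Conversely, the same computation shows that `(δX + γδ^q)/(X + γ)` maps `μ_{q+1}` into
`P¹(F_q)`, and `y ↦ γ(δ^q - y)/(y - δ)` inverts it there.
-/

open Polynomial

theorem quadratic_coeffs_eq_zero_of_two_lt_encard {R : Type*} [CommRing R] [IsDomain R]
    {s : Set R} (hs : 2 < s.encard) {a b c : R} (h : ∀ x ∈ s, a * x ^ 2 + b * x + c = 0) :
    a = 0 ∧ b = 0 ∧ c = 0 := by
  obtain ⟨t, hts, ht⟩ := Set.exists_subset_encard_eq (k := 3) (Order.add_one_le_of_lt hs)
  have htfin : t.Finite := Set.finite_of_encard_eq_coe ht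
  have hcard : htfin.toFinset.card = 3 := by
    have := htfin.encard_eq_coe_toFinset_card
    rw [ht] at this
    exact_mod_cast this.symm
  have hP : C a * X ^ 2 + C b * X + C c = 0 := by
    refine eq_zero_of_natDegree_lt_card_of_eval_eq_zero' _ htfin.toFinset
      (fun x hx => by simpa using h x (hts (htfin.mem_toFinset.1 hx))) ?_
    rw [hcard]
    exact natDegree_quadratic_le.trans_lt (by norm_num)
  refine ⟨?_, ?_, ?_⟩
  · simpa using congrArg (coeff · 2) hP
  · simpa using congrArg (coeff · 1) hP
  · simpa using congrArg (coeff · 0) hP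

theorem FiniteField.ncard_pow_eq_one {F : Type*} [Field F] [Fintype F] {m : ℕ}
    (hm : m ∣ Fintype.card F - 1) : {x : F | x ^ m = 1}.ncard = m := by
  classical
  have hm0 : m ≠ 0 := by
    rintro rfl
    have := Fintype.one_lt_card (α := F)
    rw [zero_dvd_iff] at hm
    omega
  have himage :
      {x : F | x ^ m = 1} = Units.val '' ((powMonoidHom m : Fˣ →* Fˣ).ker : Set Fˣ) := by
    ext x
    constructor
    · intro hx
      have hx0 : x ≠ 0 := by
        rintro rfl
        simp [zero_pow hm0] at hx
      exact ⟨Units.mk0 x hx0, by simpa [Units.ext_iff] using hx, rfl⟩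
    · rintro ⟨u, hu, rfl⟩
      simpa [Units.ext_iff] using hu
  rw [himage, Set.ncard_image_of_injective _ Units.val_injective, ← Nat.card_coe_set_eq,
    SetLike.coe_sort_coe, IsCyclic.card_powMonoidHom_ker, Nat.card_eq_fintype_card,
    Fintype.card_units, Nat.gcd_eq_right hm]

open scoped Classical in
noncomputable def moebius {F : Type*} [Field F] (a b c d : F) (x : F) : Option F :=
  if c * x + d = 0 then none else some ((a * x + b) / (c * x + d))

theorem moebius_mul_left {F : Type*} [Field F] {l : F} (hl : l ≠ 0) (a b c d : F) :
    moebius (l * a) (l * b) (l * c) (l * d) = moebius a b c d := by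
  funext x
  have hden : l * c * x + l * d = l * (c * x + d) := by ring
  have hnum : l * a * x + l * b = l * (a * x + b) := by ring
  by_cases h : c * x + d = 0
  · have hl' : l * c * x + l * d = 0 := by rw [hden, h, mul_zero]
    simp only [moebius, if_pos h, if_pos hl']
  · have hl' : l * c * x + l * d ≠ 0 := by rw [hden]; exact mul_ne_zero hl h
    simp only [moebius, if_neg h, if_neg hl', hden, hnum, mul_div_mul_left _ _ hl]

section Involution

variable {F : Type*} [Field F] (σ : F →+* F)

def unitCircle : Set F := {x | σ x * x = 1}

theorem moebius_mapsTo (hσ : Function.Involutive σ) {γ δ : F} (hγ : σ γ * γ = 1) :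
    Set.MapsTo (moebius δ (γ * σ δ) 1 γ) (unitCircle σ)
      (insert none (some '' Function.fixedPoints σ)) := by
  intro x (hx : σ x * x = 1)
  unfold moebius
  split_ifs with hpole
  · exact Set.mem_insert _ _
  · refine Set.mem_insert_of_mem _ ⟨_, ?_, rfl⟩
    have hpole' : σ (1 * x + γ) ≠ 0 := (map_ne_zero σ).2 hpole
    rw [Function.mem_fixedPoints_iff, map_div₀, div_eq_div_iff hpole' hpole]
    simp only [map_add, map_mul, map_one, hσ δ]
    linear_combination (σ δ - δ) * hx - (σ δ - δ) * hγ

theorem moebius_surjOn (hσ : Function.Involutive σ) {γ δ : F} (hγ : σ γ * γ = 1)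
    (hδ : σ δ ≠ δ) :
    Set.SurjOn (moebius δ (γ * σ δ) 1 γ) (unitCircle σ)
      (insert none (some '' Function.fixedPoints σ)) := by
  rintro _ (rfl | ⟨y, hy : σ y = y, rfl⟩)
  · exact ⟨-γ, show σ (-γ) * -γ = 1 by simpa using hγ, by simp [moebius]⟩
  · have hyδ : y - δ ≠ 0 := sub_ne_zero.2 fun h => hδ (h ▸ hy)
    have hσδy : σ δ - y ≠ 0 := sub_ne_zero.2 fun h => hδ (by rw [h, ← hy, ← h, hσ δ])
    have hγ0 : γ ≠ 0 := right_ne_zero_of_mul_eq_one hγ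
    have hδ' : σ δ - δ ≠ 0 := sub_ne_zero.2 hδ
    refine ⟨γ * (σ δ - y) / (y - δ), ?_, ?_⟩
    · have hyσδ : y - σ δ ≠ 0 := fun h => hσδy (by linear_combination -h)
      show σ _ * _ = 1
      simp only [map_div₀, map_mul, map_sub, hσ δ, hy]
      field_simp
      linear_combination (δ - y) * (σ δ - y) * hγ
    · have hden : 1 * (γ * (σ δ - y) / (y - δ)) + γ ≠ 0 := by
        have : 1 * (γ * (σ δ - y) / (y - δ)) + γ = γ * (σ δ - δ) / (y - δ) := by
          field_simp
          ring
        rw [this]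
        exact div_ne_zero (mul_ne_zero hγ0 hδ') hyδ
      rw [moebius, if_neg hden, Option.some_inj, div_eq_iff hden]
      field_simp
      ring

theorem moebius_quadratic_eq_zero {a b c d : F}
    (hmaps : Set.MapsTo (moebius a b c d) (unitCircle σ)
      (insert none (some '' Function.fixedPoints σ)))
    {x : F} (hx : σ x * x = 1) :
    (σ b * c - a * σ d) * x ^ 2 + (σ a * c + σ b * d - a * σ c - b * σ d) * x
      + (σ a * d - b * σ c) = 0 := by
  by_cases hpole : c * x + d = 0
  · have hpole' : σ c * σ x + σ d = 0 := by simpa using congrArg σ hpole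
    linear_combination (σ b * x + σ a) * hpole - x * (a * x + b) * hpole'
      + σ c * (a * x + b) * hx
  · obtain ⟨y, hy, hxy⟩ :
        some ((a * x + b) / (c * x + d)) ∈ some '' Function.fixedPoints σ := by
      simpa [moebius, hpole] using hmaps hx
    rw [Option.some_inj] at hxy
    have hpole' : σ (c * x + d) ≠ 0 := (map_ne_zero σ).2 hpole
    rw [Function.mem_fixedPoints_iff, hxy, map_div₀, div_eq_div_iff hpole' hpole] at hy
    simp only [map_add, map_mul] at hy
    linear_combination x * hy - (σ a * (c * x + d) - σ c * (a * x + b)) * hx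

theorem exists_eq_of_moebius_image_eq {a b c d : F} (hcircle : 2 < (unitCircle σ).encard)
    (hdet : a * d - b * c ≠ 0)
    (himage :
      moebius a b c d '' (unitCircle σ) = insert none (some '' Function.fixedPoints σ)) :
    ∃ γ δ : F, σ γ * γ = 1 ∧ σ δ ≠ δ ∧
      ∃ l : F, l ≠ 0 ∧ a = l * δ ∧ b = l * (γ * σ δ) ∧ c = l ∧ d = l * γ := by
  obtain ⟨x₀, hx₀ : σ x₀ * x₀ = 1, hx₀_none⟩ :
      none ∈ moebius a b c d '' (unitCircle σ) :=
    himage ▸ Set.mem_insert _ _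
  have hpole : c * x₀ + d = 0 := by
    by_contra hne
    simp [moebius, hne] at hx₀_none
  have hc : c ≠ 0 := by
    rintro rfl
    apply hdet
    simp only [zero_mul, zero_add] at hpole
    simp [hpole]
  have hσc : σ c ≠ 0 := (map_ne_zero σ).2 hc
  have hconst : σ a * d - b * σ c = 0 :=
    (quadratic_coeffs_eq_zero_of_two_lt_encard hcircle fun x hx =>
      moebius_quadratic_eq_zero σ (himage ▸ Set.mapsTo_image _ _) hx).2.2
  refine ⟨d / c, a / c, ?_, ?_, c, hc, ?_, ?_, rfl, ?_⟩
  · have : d / c = -x₀ := by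
      field_simp
      linear_combination hpole
    rw [this, map_neg, neg_mul_neg, hx₀]
  · rw [map_div₀, Ne, div_eq_div_iff hσc hc]
    intro h
    apply hdet
    apply mul_right_cancel₀ hσc
    linear_combination -d * h + c * hconst
  · field_simp
  · rw [map_div₀]
    field_simp
    linear_combination -hconst
  · field_simp

theorem moebius_image_eq_iff (hσ : Function.Involutive σ)
    (hcircle : 2 < (unitCircle σ).encard) {a b c d : F} (hdet : a * d - b * c ≠ 0) :
    moebius a b c d '' (unitCircle σ) = insert none (some '' Function.fixedPoints σ) ↔
      ∃ γ δ : F, σ γ * γ = 1 ∧ σ δ ≠ δ ∧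
        ∃ l : F, l ≠ 0 ∧ a = l * δ ∧ b = l * (γ * σ δ) ∧ c = l ∧ d = l * γ := by
  refine ⟨exists_eq_of_moebius_image_eq σ hcircle hdet, ?_⟩
  rintro ⟨γ, δ, hγ, hδ, l, hl, rfl, rfl, rfl, rfl⟩
  have hnormal := moebius_mul_left hl δ (γ * σ δ) 1 γ
  rw [mul_one] at hnormal
  rw [hnormal]
  exact (moebius_surjOn σ hσ hγ hδ).image_eq_of_mapsTo (moebius_mapsTo σ hσ hγ)

end Involution

open scoped Classical in
theorem stmt_6_general (p n : ℕ) (hp : p.Prime) (q : ℕ) (hq : q = p ^ n)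
    (F : Type) [Field F] [Fintype F] (hF : Fintype.card F = q ^ 2)
    (a b c d : F) (hdet : a * d - b * c ≠ 0) :
    ((fun x : F => if c * x + d = 0 then (none : Option F)
        else some ((a * x + b) / (c * x + d))) '' {x : F | x ^ (q + 1) = 1}
      = insert none (some '' {y : F | y ^ q = y})) ↔
    (∃ γ δ : F, γ ^ (q + 1) = 1 ∧ δ ^ q ≠ δ ∧
      ∃ l : F, l ≠ 0 ∧ a = l * δ ∧ b = l * (γ * δ ^ q) ∧ c = l ∧ d = l * γ) := by
  have : Fact p.Prime := ⟨hp⟩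
  have : CharP F p :=
    charP_of_card_eq_prime_pow (f := 2 * n) (by rw [hF, hq, ← pow_mul, mul_comm])
  have hfrob (x : F) : x ^ q = iterateFrobenius F p n x := by rw [hq, iterateFrobenius_def]
  have hinv : Function.Involutive (iterateFrobenius F p n) := fun x => by
    rw [← hfrob, ← hfrob, ← pow_mul, ← sq, ← hF, FiniteField.pow_card]
  have hq2 : 2 ≤ q := by
    have := Fintype.one_lt_card (α := F)
    rw [hF] at this
    by_contra! h
    interval_cases q <;> simp at this
  have hcircle : 2 < {x : F | x ^ (q + 1) = 1}.encard := by
    rw [← (Set.toFinite _).cast_ncard_eq, FiniteField.ncard_pow_eq_one]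
    · exact_mod_cast (by omega : 2 < q + 1)
    · rw [hF, ← one_pow 2, Nat.sq_sub_sq]
      exact dvd_mul_right _ _
  change moebius a b c d '' _ = _ ↔ _
  simp only [pow_succ, hfrob] at hcircle ⊢
  exact moebius_image_eq_iff _ hinv hcircle hdet

open scoped Classical in
/-- Lemma 2.6: a degree-one rational function `(aX+b)/(cX+d)` over `F_{q²}` maps `μ_{q+1}`
onto `P¹(F_q) = F_q ∪ {∞}` iff it equals `(δX + γδ^q)/(X + γ)` for some `γ ∈ μ_{q+1}` and
`δ ∈ F_{q²} \ F_q`.  Here the induced map takes values in `Option F`, with `none = ∞`. -/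
theorem stmt_6 (p n : ℕ) (hp : p.Prime) (hn : 0 < n) (q : ℕ) (hq : q = p ^ n)
    (F : Type) [Field F] [Fintype F] (hF : Fintype.card F = q ^ 2)
    (a b c d : F) (hdet : a * d - b * c ≠ 0) :
    ((fun x : F => if c * x + d = 0 then (none : Option F)
        else some ((a * x + b) / (c * x + d))) '' {x : F | x ^ (q + 1) = 1}
      = insert none (some '' {y : F | y ^ q = y})) ↔
    (∃ γ δ : F, γ ^ (q + 1) = 1 ∧ δ ^ q ≠ δ ∧
      ∃ l : F, l ≠ 0 ∧ a = l * δ ∧ b = l * (γ * δ ^ q) ∧ c = l ∧ d = l * γ) :=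
  stmt_6_general p n hp q hq F hF a b c d hdet
end

section
/- Let q be a prime power, s any integer, t a positive integer with gcd(t, q+1) = 1, and α ∈ F_{q^2}^* with α^{q+1} ≠ 1. Then the rational function g(X) = X^s (α^q X^t - 1)/(X^t - α) permutes μ_{q+1} if and only if s ≡ 0 (mod q+1). -/
/-!
On `μ_{q+1} ⊆ 𝔽_{q²}` the Frobenius `x ↦ x ^ q` is inversion, and this shows that
`h(u) = (α ^ q * u - 1) / (u - α)` maps `μ_{q+1}` into itself; `h` is injective there since
`α ^ (q + 1) ≠ 1`, and `x ↦ x ^ t` permutes `μ_{q+1}`. So `g(x) = x ^ s * h(x ^ t)` permutes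
`μ_{q+1}` when `q + 1 ∣ s`.

Conversely, on `μ_{q+1}` one has `h(u) = α ^ q - ∑_{i ≤ q} α ^ (q - i) * u ^ i`, and
`∑_{x ∈ μ_{q+1}} x ^ k` is `1` or `0` according as `q + 1 ∣ k` or not. Hence
`∑_{x ∈ μ_{q+1}} g(x) = α ^ q * [q + 1 ∣ s] - α ^ (q - i₀)`, where `i₀ ≤ q` is the unique index
with `q + 1 ∣ s + t * i₀`. This is nonzero unless `q + 1 ∣ s`, whereas a permutation of
`μ_{q+1}` has `∑ g(x) = ∑ x = 0`.
-/

open Polynomial Finset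

theorem pow_injOn_of_coprime {M : Type*} [CommGroupWithZero M] {n t : ℕ} [NeZero n]
    (ht : t.Coprime n) : Set.InjOn (· ^ t) {x : M | x ^ n = 1} := by
  intro x hx y hy hxy
  have hy0 : y ≠ 0 := by rintro rfl; simp [zero_pow (NeZero.ne n)] at hy
  have hxy1 : (x / y) ^ t.gcd n = 1 :=
    pow_gcd_eq_one.2 ⟨by simp_all [div_pow], by simp_all [div_pow]⟩
  rwa [ht, pow_one, div_eq_one_iff_eq hy0] at hxy1

theorem pow_bijOn_of_coprime {M : Type*} [CommGroupWithZero M] [Finite M] {n t : ℕ} [NeZero n]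
    (ht : t.Coprime n) : Set.BijOn (· ^ t) {x : M | x ^ n = 1} {x : M | x ^ n = 1} := by
  refine ((Set.toFinite _).injOn_iff_bijOn_of_mapsTo fun x (hx : x ^ n = 1) => ?_).1
    (pow_injOn_of_coprime ht)
  show (x ^ t) ^ n = 1
  rw [← pow_mul, mul_comm, pow_mul, hx, one_pow]

theorem IsPrimitiveRoot.sum_nthRootsFinset_zpow {K : Type*} [Field K] {ζ : K} {n : ℕ}
    [NeZero n] (hζ : IsPrimitiveRoot ζ n) (k : ℤ) :
    ∑ x ∈ nthRootsFinset n (1 : K), x ^ k = if (n : ℤ) ∣ k then (n : K) else 0 := by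
  have hmem : ∀ {x : K}, x ∈ nthRootsFinset n (1 : K) ↔ x ^ n = 1 :=
    Polynomial.mem_nthRootsFinset (NeZero.pos n) 1
  split_ifs with hk
  · obtain ⟨c, rfl⟩ := hk
    have hone : ∀ x ∈ nthRootsFinset n (1 : K), x ^ ((n : ℤ) * c) = 1 := fun x hx => by
      rw [zpow_mul, zpow_natCast, hmem.1 hx, one_zpow]
    rw [sum_congr rfl hone, sum_const, hζ.card_nthRootsFinset, nsmul_one]
  · have hζ0 : ζ ≠ 0 := hζ.ne_zero (NeZero.ne n)
    -- multiplication by `ζ` permutes the `n`-th roots of unity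
    have hshift : ∑ x ∈ nthRootsFinset n (1 : K), x ^ k
        = ζ ^ k * ∑ x ∈ nthRootsFinset n (1 : K), x ^ k := by
      rw [mul_sum]
      refine sum_nbij' (ζ⁻¹ * ·) (ζ * ·) (fun x hx => ?_) (fun x hx => ?_) (fun x _ => ?_)
        (fun x _ => ?_) (fun x _ => ?_)
      · rw [hmem, mul_pow, inv_pow, hζ.pow_eq_one, inv_one, one_mul, hmem.1 hx]
      · rw [hmem, mul_pow, hζ.pow_eq_one, one_mul, hmem.1 hx]
      · field_simp
      · field_simp
      · rw [mul_zpow, ← mul_assoc, inv_zpow, mul_inv_cancel₀ (zpow_ne_zero _ hζ0), one_mul]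
    have hζk : ζ ^ k ≠ 1 := mt (hζ.zpow_eq_one_iff_dvd k).1 hk
    have : (ζ ^ k - 1) * ∑ x ∈ nthRootsFinset n (1 : K), x ^ k = 0 := by
      linear_combination -hshift
    exact (mul_eq_zero.1 this).resolve_left (sub_ne_zero.2 hζk)

theorem Nat.Coprime.existsUnique_dvd_add_mul {n t : ℕ} [NeZero n] (ht : t.Coprime n) (s : ℤ) :
    ∃! i, i < n ∧ (n : ℤ) ∣ s + t * i := by
  have htt : (t : ZMod n) * (t : ZMod n)⁻¹ = 1 := ZMod.coe_mul_inv_eq_one t ht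
  refine ⟨((-s : ZMod n) * (t : ZMod n)⁻¹).val, ⟨ZMod.val_lt _, ?_⟩, fun i ⟨hi, hdvd⟩ => ?_⟩
  · rw [← ZMod.intCast_zmod_eq_zero_iff_dvd]
    push_cast
    rw [ZMod.natCast_zmod_val]
    linear_combination -(s : ZMod n) * htt
  · rw [← ZMod.intCast_zmod_eq_zero_iff_dvd] at hdvd
    push_cast at hdvd
    rw [← ZMod.val_natCast_of_lt hi]
    congr 1
    linear_combination (t : ZMod n)⁻¹ * hdvd - (i : ZMod n) * htt

theorem injOn_mul_sub_div_sub {K : Type*} [Field K] {a b c : K} (h : a * c ≠ b) :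
    Set.InjOn (fun u => (a * u - b) / (u - c)) {u | u ≠ c} := by
  intro u hu v hv huv
  rw [div_eq_div_iff (sub_ne_zero.2 hu) (sub_ne_zero.2 hv)] at huv
  have : (u - v) * (a * c - b) = 0 := by linear_combination -huv
  exact sub_eq_zero.1 ((mul_eq_zero.1 this).resolve_right (sub_ne_zero.2 h))

theorem mul_sub_div_sub_eq_sub_geom_sum {K : Type*} [Field K] {u α : K} {q : ℕ}
    (hu : u ^ (q + 1) = 1) (huα : u ≠ α) :
    (α ^ q * u - 1) / (u - α) = α ^ q - ∑ i ∈ range (q + 1), u ^ i * α ^ (q - i) := by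
  have hgeom := geom_sum₂_mul u α (q + 1)
  simp only [Nat.add_sub_cancel, hu] at hgeom
  rw [div_eq_iff (sub_ne_zero.2 huα)]
  linear_combination hgeom

theorem FiniteField.sub_pow_of_dvd_card {F : Type*} [Field F] [Fintype F] {q : ℕ}
    (hq : q ∣ Fintype.card F) (a b : F) : (a - b) ^ q = a ^ q - b ^ q := by
  obtain ⟨k, hp, hcard⟩ := FiniteField.card F (ringChar F)
  rw [hcard] at hq
  obtain ⟨i, -, rfl⟩ := (Nat.dvd_prime_pow hp).1 hq
  have := Fact.mk hp
  exact sub_pow_char_pow a b i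

theorem FiniteField.exists_isPrimitiveRoot_of_dvd {F : Type*} [Field F] [Fintype F] {n : ℕ}
    (hn : n ∣ Fintype.card F - 1) : ∃ ζ : F, IsPrimitiveRoot ζ n := by
  classical
  have hn0 : n ≠ 0 := by
    rintro rfl
    have := Fintype.one_lt_card (α := F)
    simp only [zero_dvd_iff] at hn
    omega
  have hcard :=
    IsCyclic.card_orderOf_eq_totient (α := Fˣ) (d := n) (by rwa [Fintype.card_units])
  obtain ⟨ζ, hζ⟩ := Finset.card_pos.1 (hcard ▸ Nat.totient_pos.2 (Nat.pos_of_ne_zero hn0))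
  exact ⟨ζ, IsPrimitiveRoot.coe_units_iff.2 ((mem_filter.1 hζ).2 ▸ IsPrimitiveRoot.orderOf ζ)⟩

section CardEqSq

variable {F : Type*} [Field F] [Fintype F] {q : ℕ}

theorem natCast_eq_zero_of_card_eq_sq (hF : Fintype.card F = q ^ 2) : (q : F) = 0 := by
  have : (q : F) ^ 2 = 0 := by rw [← Nat.cast_pow, ← hF, Nat.cast_card_eq_zero]
  exact pow_eq_zero_iff two_ne_zero |>.1 this

theorem sum_nthRootsFinset_zpow_of_card_eq_sq (hF : Fintype.card F = q ^ 2) (k : ℤ) :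
    ∑ x ∈ nthRootsFinset (q + 1) (1 : F), x ^ k = if (q : ℤ) + 1 ∣ k then 1 else 0 := by
  have hdvd : q + 1 ∣ Fintype.card F - 1 := by
    rw [hF, ← one_pow 2, Nat.sq_sub_sq]
    exact dvd_mul_right _ _
  obtain ⟨ζ, hζ⟩ := FiniteField.exists_isPrimitiveRoot_of_dvd hdvd
  rw [hζ.sum_nthRootsFinset_zpow]
  push_cast [natCast_eq_zero_of_card_eq_sq hF, zero_add]
  rfl

theorem sum_nthRootsFinset_eq_zero_of_card_eq_sq (hF : Fintype.card F = q ^ 2) :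
    ∑ x ∈ nthRootsFinset (q + 1) (1 : F), x = 0 := by
  have hq0 : q ≠ 0 := by rintro rfl; simp at hF
  have hndvd : ¬ (q : ℤ) + 1 ∣ 1 := fun h => by have := Int.le_of_dvd one_pos h; omega
  simpa [hndvd] using sum_nthRootsFinset_zpow_of_card_eq_sq hF 1

theorem mul_sub_div_sub_pow_succ_eq_one (hF : Fintype.card F = q ^ 2) {α u : F}
    (hα : α ^ (q + 1) ≠ 1) (hu : u ^ (q + 1) = 1) :
    ((α ^ q * u - 1) / (u - α)) ^ (q + 1) = 1 := by
  have hu0 : u ≠ 0 := by rintro rfl; simp at hu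
  have huα : u - α ≠ 0 := sub_ne_zero.2 fun h => hα (h ▸ hu)
  have hfrob :=
    FiniteField.sub_pow_of_dvd_card (hF ▸ dvd_pow_self q two_ne_zero : q ∣ Fintype.card F)
  have hαqq : (α ^ q) ^ q = α := by rw [← pow_mul, ← sq, ← hF, FiniteField.pow_card]
  -- `x ↦ x ^ q` is the conjugation of `𝔽_{q²}/𝔽_q`, which inverts `u`
  have hnum : u * (α ^ q * u - 1) ^ q = α - u := by
    rw [hfrob, mul_pow, hαqq, one_pow]
    linear_combination α * hu
  have hden : u * (u - α) ^ q = 1 - α ^ q * u := by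
    rw [hfrob]
    linear_combination hu
  rw [div_pow, div_eq_one_iff_eq (pow_ne_zero _ huα)]
  refine mul_left_cancel₀ hu0 ?_
  linear_combination (α ^ q * u - 1) * hnum - (u - α) * hden

theorem bijOn_mul_sub_div_sub (hF : Fintype.card F = q ^ 2) {α : F} (hα : α ^ (q + 1) ≠ 1) :
    Set.BijOn (fun u => (α ^ q * u - 1) / (u - α))
      {u | u ^ (q + 1) = 1} {u | u ^ (q + 1) = 1} := by
  refine ((Set.toFinite _).injOn_iff_bijOn_of_mapsTo
    fun u (hu : u ^ (q + 1) = 1) => mul_sub_div_sub_pow_succ_eq_one hF hα hu).1 ?_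
  exact (injOn_mul_sub_div_sub (by rwa [← pow_succ])).mono
    fun u (hu : u ^ (q + 1) = 1) (huα : u = α) => hα (huα ▸ hu)

theorem sum_zpow_mul_mul_sub_div_sub (hF : Fintype.card F = q ^ 2) {α : F}
    (hα : α ^ (q + 1) ≠ 1) (s : ℤ) (t : ℕ) :
    ∑ x ∈ nthRootsFinset (q + 1) (1 : F), x ^ s * (α ^ q * x ^ t - 1) / (x ^ t - α)
      = α ^ q * (if (q : ℤ) + 1 ∣ s then 1 else 0)
        - ∑ i ∈ range (q + 1), α ^ (q - i) * if (q : ℤ) + 1 ∣ s + t * i then 1 else 0 := by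
  have hpointwise : ∀ x ∈ nthRootsFinset (q + 1) (1 : F),
      x ^ s * (α ^ q * x ^ t - 1) / (x ^ t - α)
        = α ^ q * x ^ s - ∑ i ∈ range (q + 1), α ^ (q - i) * x ^ (s + t * i) := by
    intro x hx
    rw [Polynomial.mem_nthRootsFinset q.succ_pos] at hx
    have hx0 : x ≠ 0 := by rintro rfl; simp at hx
    have hxt : (x ^ t) ^ (q + 1) = 1 := by rw [← pow_mul, mul_comm, pow_mul, hx, one_pow]
    rw [mul_div_assoc, mul_sub_div_sub_eq_sub_geom_sum hxt fun h => hα (h ▸ hxt :), mul_sub,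
      mul_sum, mul_comm]
    congr 1
    refine sum_congr rfl fun i _ => ?_
    rw [zpow_add₀ hx0, ← pow_mul, zpow_mul, zpow_natCast, zpow_natCast]
    ring
  rw [sum_congr rfl hpointwise, sum_sub_distrib, ← mul_sum, sum_comm]
  simp only [← mul_sum, sum_nthRootsFinset_zpow_of_card_eq_sq hF]

theorem sum_zpow_mul_mul_sub_div_sub_ne_zero (hF : Fintype.card F = q ^ 2) {α : F}
    (hα0 : α ≠ 0) (hα : α ^ (q + 1) ≠ 1) {s : ℤ} {t : ℕ} (ht : t.Coprime (q + 1))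
    (hs : ¬ (q : ℤ) + 1 ∣ s) :
    ∑ x ∈ nthRootsFinset (q + 1) (1 : F), x ^ s * (α ^ q * x ^ t - 1) / (x ^ t - α) ≠ 0 := by
  obtain ⟨i₀, ⟨hi₀, hdvd₀⟩, huniq⟩ := ht.existsUnique_dvd_add_mul s
  push_cast at hdvd₀ huniq
  have hsingle :
      ∑ i ∈ range (q + 1), α ^ (q - i) * (if (q : ℤ) + 1 ∣ s + t * i then 1 else 0)
        = α ^ (q - i₀) := by
    rw [sum_eq_single_of_mem i₀ (mem_range.2 hi₀) fun i hi hne => by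
        rw [if_neg fun hdvd => hne (huniq i ⟨mem_range.1 hi, hdvd⟩), mul_zero],
      if_pos hdvd₀, mul_one]
  rw [sum_zpow_mul_mul_sub_div_sub hF hα, hsingle, if_neg hs, mul_zero, zero_sub, neg_ne_zero]
  exact pow_ne_zero _ hα0

end CardEqSq

theorem stmt_7_general (q : ℕ)
    (F : Type) [Field F] [Fintype F] (hF : Fintype.card F = q ^ 2)
    (s : ℤ) (t : ℕ) (hgcd : Nat.gcd t (q + 1) = 1)
    (α : F) (hα0 : α ≠ 0) (hα : α ^ (q + 1) ≠ 1) :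
    Set.BijOn (fun x : F => x ^ s * (α ^ q * x ^ t - 1) / (x ^ t - α))
        {x : F | x ^ (q + 1) = 1} {x : F | x ^ (q + 1) = 1} ↔
      ((q : ℤ) + 1) ∣ s := by
  constructor
  · intro hbij
    by_contra hs
    rw [← nthRootsFinset_toSet q.succ_pos] at hbij
    refine sum_zpow_mul_mul_sub_div_sub_ne_zero hF hα0 hα hgcd hs ?_
    rw [sum_nbij (g := fun x => x) _ hbij.mapsTo hbij.injOn hbij.surjOn fun _ _ => rfl]
    exact sum_nthRootsFinset_eq_zero_of_card_eq_sq hF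
  · rintro ⟨c, rfl⟩
    refine ((bijOn_mul_sub_div_sub hF hα).comp (pow_bijOn_of_coprime hgcd)).congr
      fun x (hx : x ^ (q + 1) = 1) => ?_
    have hxs : x ^ (((q : ℤ) + 1) * c) = 1 := by
      rw [zpow_mul, ← Nat.cast_succ, zpow_natCast, hx, one_zpow]
    simp only [Function.comp_apply, hxs, one_mul]

/-- Lemma 4.2: `g(X) = X^s(α^q X^t - 1)/(X^t - α)` permutes `μ_{q+1}` iff `(q+1) ∣ s`. -/
theorem stmt_7 (p n : ℕ) (hp : p.Prime) (hn : 0 < n) (q : ℕ) (hq : q = p ^ n)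
    (F : Type) [Field F] [Fintype F] (hF : Fintype.card F = q ^ 2)
    (s : ℤ) (t : ℕ) (ht : 0 < t) (hgcd : Nat.gcd t (q + 1) = 1)
    (α : F) (hα0 : α ≠ 0) (hα : α ^ (q + 1) ≠ 1) :
    Set.BijOn (fun x : F => x ^ s * (α ^ q * x ^ t - 1) / (x ^ t - α))
        {x : F | x ^ (q + 1) = 1} {x : F | x ^ (q + 1) = 1} ↔
      ((q : ℤ) + 1) ∣ s :=
  stmt_7_general q F hF s t hgcd α hα0 hα
end

section
/- Let q be a prime power, r and t positive integers with gcd(t, q+1) = 1, and α ∈ F_{q^2}^*. Then the polynomial f(X) = X^r (X^{t(q-1)} - α) permutes F_{q^2} if and only if gcd(r, q-1) = 1, r ≡ t (mod q+1), and α^{q+1} ≠ 1. -/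
/-!
For `x ≠ 0` the element `U = x^{t(q-1)}` lies in the group `μ_{q+1}` of `(q+1)`-th roots of
unity, and since `y ↦ y^q` is additive, `U (U - α)^{q-1} (U - α) = 1 - α^q U` on `μ_{q+1}`.
So if `r ≡ t (mod q+1)`, then `f(x)^{q-1} = U (U - α)^{q-1}` determines `U` through a Möbius
transformation that is injective as soon as `α^{q+1} ≠ 1`; `U` determines `x^{q-1}` because
`gcd(t, q+1) = 1`, and `x^{q-1}` together with `x^r` determines `x` when `gcd(r, q-1) = 1`.

Conversely, an element of prime order dividing `gcd(r, q-1)` has the same image as `1`; if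
`α^{q+1} = 1` then `α = w^{t(q-1)}` for some `w ≠ 0`, and `f(w) = 0 = f(0)`. Finally, expanding
`(U - α)^{q-1}` as a geometric sum gives `∑ₓ f(x)^{q-1} = -α^{q-1-i}`, where `i < q` is the
solution of `r + t i ≡ 0 (mod q+1)`, which exists unless `r ≡ t`; for a permutation this power
sum is `∑ₓ x^{q-1} = 0`.
-/

open Finset Function

theorem FiniteField.sum_pow_eq_ite {K : Type*} [Field K] [Fintype K] {k : ℕ} (hk : k ≠ 0) :
    ∑ x : K, x ^ k = if Fintype.card K - 1 ∣ k then -1 else 0 := by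
  classical
  rw [← FiniteField.sum_pow_units K k, ← sum_filter_of_ne (p := (· ≠ 0))
    (fun x _ hx ↦ by rintro rfl; exact hx (zero_pow hk))]
  exact (sum_subtype _ (by simp) _).trans
    (Fintype.sum_equiv unitsEquivNeZero.symm _ _ fun _ ↦ rfl)

theorem FiniteField.coprime_of_injective_pow_mul_comp_pow {K : Type*} [Field K] [Fintype K]
    {r m : ℕ} {h : K → K} (hm : m ∣ Fintype.card K - 1)
    (hf : Injective fun x ↦ x ^ r * h (x ^ m)) : r.Coprime m := by
  classical
  by_contra hrm
  obtain ⟨ℓ, hℓ, hℓr, hℓm⟩ := Nat.Prime.not_coprime_iff_dvd.1 hrm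
  have : Fact ℓ.Prime := ⟨hℓ⟩
  obtain ⟨z, hz⟩ := exists_prime_orderOf_dvd_card (G := Kˣ) ℓ
    (by rw [Fintype.card_units]; exact hℓm.trans hm)
  have hpow {k : ℕ} (hk : ℓ ∣ k) : (z : K) ^ k = 1 := by
    rw [← Units.val_pow_eq_pow_val, orderOf_dvd_iff_pow_eq_one.1 (hz ▸ hk), Units.val_one]
  have hz1 : (z : K) = 1 := hf (by simp only [hpow hℓr, hpow hℓm, one_pow])
  exact hℓ.one_lt.ne' (hz ▸ orderOf_eq_one_iff.2 (Units.val_eq_one.1 hz1))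

theorem eq_of_pow_eq_pow_of_coprime_s8 {G₀ : Type*} [CommGroupWithZero G₀] {x y : G₀} {m n : ℕ}
    (hmn : m.Coprime n) (hy : y ≠ 0) (hm : x ^ m = y ^ m) (hn : x ^ n = y ^ n) : x = y := by
  rw [← div_eq_one_iff_eq hy, ← pow_eq_one_iff_of_coprime hmn, div_pow, div_pow, hm, hn,
    div_self (pow_ne_zero m hy), div_self (pow_ne_zero n hy)]
  exact ⟨rfl, rfl⟩

theorem exists_pow_eq_of_pow_eq_one_of_coprime {M : Type*} [Monoid M] {a : M} {t d : ℕ}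
    (ha : a ^ d = 1) (ht : t.Coprime d) : ∃ b, b ^ d = 1 ∧ b ^ t = a := by
  obtain ⟨m, hm⟩ := exists_pow_eq_self_of_coprime
    (ht.coprime_dvd_right (orderOf_dvd_of_pow_eq_one ha))
  exact ⟨a ^ m, by rw [← pow_mul, mul_comm, pow_mul, ha, one_pow],
    by rw [← pow_mul, mul_comm, pow_mul, hm]⟩

theorem IsCyclic.exists_pow_eq_of_pow_eq_one {G : Type*} [Group G] [IsCyclic G] [Finite G]
    {m d : ℕ} (hG : Nat.card G = m * d) {a : G} (ha : a ^ d = 1) : ∃ b, b ^ m = a := by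
  obtain ⟨g, hg⟩ := IsCyclic.exists_monoid_generator (α := G)
  obtain ⟨j, rfl⟩ := Submonoid.mem_powers_iff _ _ |>.1 (hg a)
  have hd : d ≠ 0 := right_ne_zero_of_mul (hG ▸ Nat.card_pos.ne')
  have hmj : m * d ∣ j * d := by
    rw [← hG, ← orderOf_eq_card_of_forall_mem_powers hg]
    exact orderOf_dvd_of_pow_eq_one (by rw [pow_mul, ha])
  obtain ⟨k, rfl⟩ := (Nat.mul_dvd_mul_iff_right (Nat.pos_of_ne_zero hd)).1 hmj
  exact ⟨g ^ k, by rw [← pow_mul, mul_comm]⟩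

namespace Nat

theorem exists_lt_dvd_add_mul_of_coprime {t d : ℕ} (r : ℕ) (ht : t.Coprime d) (hd : d ≠ 0) :
    ∃ i < d, d ∣ r + t * i := by
  obtain ⟨i, hi, hti⟩ := exists_mul_mod_eq_of_coprime ((d - 1) * r) ht hd
  refine ⟨i, hi, (modEq_zero_iff_dvd).1 ?_⟩
  calc r + t * i ≡ r + (d - 1) * r [MOD d] := ModEq.add_left r hti
    _ = d * r := by rw [← one_add_mul, Nat.add_sub_cancel' (one_le_iff_ne_zero.2 hd)]
    _ ≡ 0 [MOD d] := (modEq_zero_iff_dvd).2 (dvd_mul_right d r)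

theorem eq_of_dvd_add_mul_of_coprime {r t d i j : ℕ} (ht : t.Coprime d) (hi : i < d) (hj : j < d)
    (hdi : d ∣ r + t * i) (hdj : d ∣ r + t * j) : i = j :=
  ((((modEq_zero_iff_dvd.2 hdi).trans (modEq_zero_iff_dvd.2 hdj).symm).add_left_cancel' r)
    |>.cancel_left_of_coprime (coprime_comm.1 ht)).eq_of_lt_of_lt hi hj

theorem filter_range_dvd_add_mul_eq_singleton {r t q : ℕ} (ht : t.Coprime (q + 1))
    (hrt : ¬r ≡ t [MOD q + 1]) : ∃ i, {i ∈ range q | q + 1 ∣ r + t * i} = {i} := by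
  obtain ⟨i, hi, hdvd⟩ := exists_lt_dvd_add_mul_of_coprime r ht q.succ_ne_zero
  have hiq : i ≠ q := by
    rintro rfl
    refine hrt (modEq_iff_dvd.2 ?_)
    have hdvd' : ((i : ℤ) + 1) ∣ r + t * i := by exact_mod_cast hdvd
    have hsub : (t : ℤ) - r = t * (i + 1) - (r + t * i) := by ring
    push_cast
    rw [hsub]
    exact (dvd_mul_left _ _).sub hdvd'
  refine ⟨i, ext fun j ↦ ?_⟩
  simp only [mem_filter, mem_range, mem_singleton]
  constructor
  · rintro ⟨hj, hdj⟩
    exact eq_of_dvd_add_mul_of_coprime ht (by omega) hi hdj hdvd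
  · rintro rfl
    exact ⟨by omega, hdvd⟩

end Nat

section ExpChar

variable {R : Type*} [CommRing R] {p n q : ℕ} [ExpChar R p]

theorem mul_sub_pow_sub_one_mul_sub (hq : q = p ^ n) {W : R} (hW : W ^ (q + 1) = 1) (α : R) :
    W * (W - α) ^ (q - 1) * (W - α) = 1 - α ^ q * W := by
  have hq0 : 0 < q := hq ▸ pow_pos (expChar_pos R p) n
  rw [mul_assoc, ← pow_succ, Nat.sub_add_cancel hq0, hq, sub_pow_expChar_pow, ← hq, mul_sub,
    ← pow_succ', hW, mul_comm]

variable [IsDomain R]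

theorem eq_of_mul_sub_pow_sub_one_eq (hq : q = p ^ n) {α U V : R} (hα : α ^ (q + 1) ≠ 1)
    (hU : U ^ (q + 1) = 1) (hV : V ^ (q + 1) = 1)
    (h : U * (U - α) ^ (q - 1) = V * (V - α) ^ (q - 1)) : U = V := by
  have key : (1 - α ^ q * U) * (V - α) = (1 - α ^ q * V) * (U - α) := by
    rw [← mul_sub_pow_sub_one_mul_sub hq hU, ← mul_sub_pow_sub_one_mul_sub hq hV, h]
    ring
  have : (V - U) * (1 - α ^ (q + 1)) = 0 := by linear_combination key
  rcases mul_eq_zero.1 this with h | h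
  · exact (sub_eq_zero.1 h).symm
  · exact absurd (sub_eq_zero.1 h).symm hα

theorem sub_pow_sub_one_eq_geom_sum₂ (hq : q = p ^ n) {a b : R} (hab : a ≠ b) :
    (a - b) ^ (q - 1) = ∑ i ∈ range q, a ^ i * b ^ (q - 1 - i) := by
  have hq0 : 0 < q := hq ▸ pow_pos (expChar_pos R p) n
  refine mul_right_cancel₀ (sub_ne_zero.2 hab) ?_
  rw [geom_sum₂_mul, ← pow_succ, Nat.sub_add_cancel hq0, hq, sub_pow_expChar_pow]

end ExpChar

section FiniteField

theorem card_sub_one_eq_of_card_eq_sq {K : Type*} [Fintype K] {q : ℕ}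
    (hK : Fintype.card K = q ^ 2) : Fintype.card K - 1 = (q - 1) * (q + 1) := by
  rw [hK, ← one_pow 2, Nat.sq_sub_sq, one_pow, mul_comm]

variable {F : Type*} [Field F] [Fintype F] {p n q r t : ℕ} [ExpChar F p] {α : F}

theorem one_lt_of_card_eq_sq (hF : Fintype.card F = q ^ 2) : 1 < q :=
  (Nat.one_lt_pow_iff two_ne_zero).1 (hF ▸ Fintype.one_lt_card)

theorem pow_sub_one_pow_add_one_eq_one (hF : Fintype.card F = q ^ 2) {x : F} (hx : x ≠ 0) :
    (x ^ (q - 1)) ^ (q + 1) = 1 := by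
  rw [← pow_mul, ← card_sub_one_eq_of_card_eq_sq hF, FiniteField.pow_card_sub_one_eq_one x hx]

theorem pow_mul_sub_one_pow_add_one_eq_one (hF : Fintype.card F = q ^ 2) (t : ℕ) {x : F}
    (hx : x ≠ 0) : (x ^ (t * (q - 1))) ^ (q + 1) = 1 := by
  rw [mul_comm, pow_mul, ← pow_mul, mul_comm, pow_mul, pow_sub_one_pow_add_one_eq_one hF hx,
    one_pow]

theorem pow_mul_pow_sub_eq_zero_iff (hF : Fintype.card F = q ^ 2) (hα : α ^ (q + 1) ≠ 1)
    (hr : r ≠ 0) {x : F} : x ^ r * (x ^ (t * (q - 1)) - α) = 0 ↔ x = 0 := by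
  refine ⟨fun h ↦ ?_, fun h ↦ by rw [h, zero_pow hr, zero_mul]⟩
  by_contra hx
  rcases mul_eq_zero.1 h with h | h
  · exact hx (pow_eq_zero_iff hr |>.1 h)
  · exact hα (sub_eq_zero.1 h ▸ pow_mul_sub_one_pow_add_one_eq_one hF t hx)

theorem pow_mul_pow_sub_pow_sub_one_of_modEq (hF : Fintype.card F = q ^ 2)
    (hrt : r ≡ t [MOD q + 1]) {x : F} (hx : x ≠ 0) :
    (x ^ r * (x ^ (t * (q - 1)) - α)) ^ (q - 1) =
      x ^ (t * (q - 1)) * (x ^ (t * (q - 1)) - α) ^ (q - 1) := by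
  rw [mul_pow, ← pow_mul, mul_comm r, pow_mul,
    pow_eq_pow_of_modEq hrt (pow_sub_one_pow_add_one_eq_one hF hx), ← pow_mul, mul_comm (q - 1),
    mul_comm]

theorem injective_pow_mul_pow_sub (hq : q = p ^ n) (hF : Fintype.card F = q ^ 2)
    (hr0 : r ≠ 0) (hr : r.Coprime (q - 1)) (ht : t.Coprime (q + 1)) (hrt : r ≡ t [MOD q + 1])
    (hα : α ^ (q + 1) ≠ 1) : Injective fun x : F ↦ x ^ r * (x ^ (t * (q - 1)) - α) := by
  intro x y hxy
  simp only at hxy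
  have hzero (z : F) := pow_mul_pow_sub_eq_zero_iff (t := t) hF hα hr0 (x := z)
  rcases eq_or_ne x 0 with rfl | hx
  · exact ((hzero y).1 (hxy.symm.trans ((hzero 0).2 rfl))).symm
  rcases eq_or_ne y 0 with rfl | hy
  · exact (hzero x).1 (hxy.trans ((hzero 0).2 rfl))
  have hU := pow_mul_sub_one_pow_add_one_eq_one hF t hx
  have hUV : x ^ (t * (q - 1)) = y ^ (t * (q - 1)) :=
    eq_of_mul_sub_pow_sub_one_eq hq hα hU (pow_mul_sub_one_pow_add_one_eq_one hF t hy) <| by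
      rw [← pow_mul_pow_sub_pow_sub_one_of_modEq hF hrt hx,
        ← pow_mul_pow_sub_pow_sub_one_of_modEq hF hrt hy, hxy]
  have hu : x ^ (q - 1) = y ^ (q - 1) := by
    refine eq_of_pow_eq_pow_of_coprime_s8 ht (pow_ne_zero _ hy) ?_ ?_
    · rw [← pow_mul, ← pow_mul, mul_comm, hUV]
    · rw [pow_sub_one_pow_add_one_eq_one hF hx, pow_sub_one_pow_add_one_eq_one hF hy]
  have hxr : x ^ r = y ^ r := by
    refine mul_right_cancel₀ (sub_ne_zero.2 fun h : x ^ (t * (q - 1)) = α ↦ hα (h ▸ hU)) ?_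
    simpa only [hUV] using hxy
  exact eq_of_pow_eq_pow_of_coprime_s8 hr hy hxr hu

theorem pow_add_one_ne_one_of_injective (hF : Fintype.card F = q ^ 2) (ht : t.Coprime (q + 1))
    (hr : r ≠ 0) (hf : Injective fun x : F ↦ x ^ r * (x ^ (t * (q - 1)) - α)) :
    α ^ (q + 1) ≠ 1 := by
  classical
  intro hα
  obtain ⟨β, hβ, rfl⟩ := exists_pow_eq_of_pow_eq_one_of_coprime hα ht
  have hβ0 : β ≠ 0 := by rintro rfl; simp at hβ
  obtain ⟨w, hw⟩ := IsCyclic.exists_pow_eq_of_pow_eq_one (G := Fˣ) (a := Units.mk0 β hβ0)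
    (by rw [Nat.card_eq_fintype_card, Fintype.card_units, card_sub_one_eq_of_card_eq_sq hF])
    (Units.ext (by simpa using hβ))
  have hw' : (w : F) ^ (q - 1) = β := by simpa using congrArg Units.val hw
  exact w.ne_zero (hf (by simp [mul_comm t, pow_mul, hw', zero_pow hr]))

theorem pow_mul_pow_sub_pow_sub_one_eq_sum (hq : q = p ^ n) (hF : Fintype.card F = q ^ 2)
    (hr : r ≠ 0) (hα : α ^ (q + 1) ≠ 1) (x : F) :
    (x ^ r * (x ^ (t * (q - 1)) - α)) ^ (q - 1) =
      ∑ i ∈ range q, α ^ (q - 1 - i) * x ^ ((q - 1) * (r + t * i)) := by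
  have hq1 : q - 1 ≠ 0 := Nat.sub_ne_zero_of_lt (one_lt_of_card_eq_sq hF)
  rcases eq_or_ne x 0 with rfl | hx
  · simp [zero_pow hr, zero_pow hq1, hq1, hr]
  have hU : x ^ (t * (q - 1)) ≠ α :=
    fun h ↦ hα (h ▸ pow_mul_sub_one_pow_add_one_eq_one hF t hx)
  rw [mul_pow, sub_pow_sub_one_eq_geom_sum₂ hq hU, mul_sum]
  refine sum_congr rfl fun i _ ↦ ?_
  ring

theorem sum_pow_mul_pow_sub_pow_sub_one (hq : q = p ^ n) (hF : Fintype.card F = q ^ 2)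
    (hr : r ≠ 0) (hα : α ^ (q + 1) ≠ 1) :
    ∑ x : F, (x ^ r * (x ^ (t * (q - 1)) - α)) ^ (q - 1) =
      -∑ i ∈ range q with q + 1 ∣ r + t * i, α ^ (q - 1 - i) := by
  have hq1 : 0 < q - 1 := Nat.sub_pos_of_lt (one_lt_of_card_eq_sq hF)
  calc ∑ x : F, (x ^ r * (x ^ (t * (q - 1)) - α)) ^ (q - 1)
      = ∑ i ∈ range q, α ^ (q - 1 - i) * ∑ x : F, x ^ ((q - 1) * (r + t * i)) := by
        simp_rw [pow_mul_pow_sub_pow_sub_one_eq_sum hq hF hr hα, mul_sum]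
        exact sum_comm
    _ = ∑ i ∈ range q, if q + 1 ∣ r + t * i then -α ^ (q - 1 - i) else 0 := by
        refine sum_congr rfl fun i _ ↦ ?_
        rw [FiniteField.sum_pow_eq_ite (by positivity), card_sub_one_eq_of_card_eq_sq hF]
        simp only [Nat.mul_dvd_mul_iff_left hq1, mul_ite, mul_neg, mul_one, mul_zero]
    _ = _ := by rw [← sum_neg_distrib, sum_filter]

theorem modEq_of_bijective_pow_mul_pow_sub (hq : q = p ^ n) (hF : Fintype.card F = q ^ 2)
    (hr : r ≠ 0) (ht : t.Coprime (q + 1)) (hα0 : α ≠ 0) (hα : α ^ (q + 1) ≠ 1)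
    (hf : Bijective fun x : F ↦ x ^ r * (x ^ (t * (q - 1)) - α)) : r ≡ t [MOD q + 1] := by
  by_contra hrt
  obtain ⟨i, hi⟩ := Nat.filter_range_dvd_add_mul_eq_singleton ht hrt
  have hsum := sum_pow_mul_pow_sub_pow_sub_one (t := t) hq hF hr hα
  rw [hf.sum_comp (· ^ (q - 1)), FiniteField.sum_pow_lt_card_sub_one, hi, sum_singleton,
    eq_comm, neg_eq_zero] at hsum
  · exact pow_ne_zero _ hα0 hsum
  · rw [card_sub_one_eq_of_card_eq_sq hF]
    have := one_lt_of_card_eq_sq hF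
    exact lt_mul_of_one_lt_right (by omega) (by omega)

end FiniteField

theorem stmt_8_general (p n : ℕ) (hp : p.Prime) (q : ℕ) (hq : q = p ^ n)
    (F : Type) [Field F] [Fintype F] (hF : Fintype.card F = q ^ 2)
    (r t : ℕ) (hr : 0 < r) (hgcd : Nat.gcd t (q + 1) = 1)
    (α : F) (hα0 : α ≠ 0) :
    Function.Bijective (fun x : F => x ^ r * (x ^ (t * (q - 1)) - α)) ↔
      (Nat.gcd r (q - 1) = 1 ∧ r ≡ t [MOD q + 1] ∧ α ^ (q + 1) ≠ 1) := by
  have : Fact p.Prime := ⟨hp⟩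
  have : CharP F p := charP_of_card_eq_prime_pow (hF.trans (by rw [hq, ← pow_mul]))
  constructor
  · intro hf
    have hα := pow_add_one_ne_one_of_injective hF hgcd hr.ne' hf.injective
    refine ⟨FiniteField.coprime_of_injective_pow_mul_comp_pow (h := fun y ↦ y ^ t - α) ?_
      (by simpa only [← pow_mul, mul_comm (q - 1)] using hf.injective),
      modEq_of_bijective_pow_mul_pow_sub hq hF hr.ne' hgcd hα0 hα hf, hα⟩
    exact card_sub_one_eq_of_card_eq_sq hF ▸ dvd_mul_right _ _
  · rintro ⟨hrq, hrt, hα⟩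
    exact Finite.injective_iff_bijective.1
      (injective_pow_mul_pow_sub hq hF hr.ne' hrq hgcd hrt hα)

/-- Corollary 4.3: `f(X) = X^r (X^{t(q-1)} - α)` permutes `F_{q²}` iff `gcd(r, q-1) = 1`,
`r ≡ t (mod q+1)` and `α^{q+1} ≠ 1`. -/
theorem stmt_8 (p n : ℕ) (hp : p.Prime) (hn : 0 < n) (q : ℕ) (hq : q = p ^ n)
    (F : Type) [Field F] [Fintype F] (hF : Fintype.card F = q ^ 2)
    (r t : ℕ) (hr : 0 < r) (ht : 0 < t) (hgcd : Nat.gcd t (q + 1) = 1)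
    (α : F) (hα0 : α ≠ 0) :
    Function.Bijective (fun x : F => x ^ r * (x ^ (t * (q - 1)) - α)) ↔
      (Nat.gcd r (q - 1) = 1 ∧ r ≡ t [MOD q + 1] ∧ α ^ (q + 1) ≠ 1) :=
  stmt_8_general p n hp q hq F hF r t hr hgcd α hα0
end

section
/- Let q be a prime power and n a positive integer, and let Δ be the set of all elements (w^q - w)^{q-1} with w ∈ F_{q^n} \ F_q. Then in F_{q^n}[Y] one has ∏_{u ∈ Δ} (Y - u) = Σ_{i=1}^{n} Y^{(q^{i-1}-1)/(q-1)}. -/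
/-!
Put `N i = 1 + q + ⋯ + q^(i-1) = (q^i - 1)/(q - 1)`. For `w ∉ 𝔽_q` let `v = w^q - w ≠ 0` and
`u = v^(q-1)`. Since `x ↦ x^q` is additive, `v * u^(N i) = v^(q^i) = w^(q^(i+1)) - w^(q^i)`, so
`v * ∑_{i<n} u^(N i)` telescopes to `w^(q^n) - w = 0`: every `u ∈ Δ` is a root of the monic
polynomial `∑_{i<n} Y^(N i)` of degree `N (n-1)`. Each fibre of `w ↦ (w^q - w)^(q-1)` has at most
`q (q-1)` points, so `|Δ| ≥ (q^n - q)/(q(q-1)) = N (n-1)`, and the monic polynomial with root set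
`Δ` must be all of it.
-/

open Polynomial Finset

lemma Nat.sub_one_mul_geomSum_add_one {q : ℕ} (hq : 0 < q) (i : ℕ) :
    (q - 1) * ∑ j ∈ range i, q ^ j + 1 = q ^ i := by
  rw [mul_comm]
  simpa only [Nat.sub_add_cancel (Nat.one_le_of_lt hq)] using geom_sum_mul_add (q - 1) i

section Frobenius

variable {R : Type*} [CommRing R] {p m q : ℕ} [ExpChar R p]

lemma pow_sub_self_mul_sum_pow_geomSum (hq : q = p ^ m) (w : R) (n : ℕ) :
    (w ^ q - w) * ∑ i ∈ range n, ((w ^ q - w) ^ (q - 1)) ^ ∑ j ∈ range i, q ^ j =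
      w ^ q ^ n - w := by
  have hq0 : 0 < q := hq ▸ expChar_pow_pos R p m
  have hterm : ∀ i, (w ^ q - w) * ((w ^ q - w) ^ (q - 1)) ^ ∑ j ∈ range i, q ^ j =
      w ^ q ^ (i + 1) - w ^ q ^ i := fun i => by
    have hqi : q ^ i = p ^ (m * i) := by rw [hq, pow_mul]
    rw [← pow_mul, ← pow_succ', Nat.sub_one_mul_geomSum_add_one hq0, hqi, sub_pow_expChar_pow,
      ← hqi, ← pow_mul, ← pow_succ']
  rw [mul_sum, sum_congr rfl fun i _ => hterm i, sum_range_sub (fun i => w ^ q ^ i), pow_zero,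
    pow_one]

end Frobenius

section Roots

variable {R : Type*} [CommRing R] [IsDomain R]

lemma card_filter_eval_eq_le_natDegree [DecidableEq R] (f : R[X])
    (hf : 0 < f.natDegree) (s : Finset R) (u : R) : #{x ∈ s | f.eval x = u} ≤ f.natDegree := by
  have hfu : f - C u ≠ 0 := ne_zero_of_natDegree_gt (n := 0) (by rwa [natDegree_sub_C])
  rw [← natDegree_sub_C (a := u)]
  refine card_le_degree_of_subset_roots fun x hx => ?_
  rw [mem_roots hfu, IsRoot, eval_sub, eval_C, sub_eq_zero]
  exact (mem_filter.mp hx).2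

lemma prod_X_sub_C_eq_of_monic [DecidableEq R] {f : R[X]} (hf : f.Monic) {s : Finset R}
    (hroot : ∀ u ∈ s, f.IsRoot u) (hcard : f.natDegree ≤ #s) : ∏ u ∈ s, (X - C u) = f := by
  have hle : s.val ≤ f.roots := (Multiset.le_iff_subset s.nodup).2 fun u hu =>
    (mem_roots hf.ne_zero).2 (hroot u hu)
  have heq : s.val = f.roots := Multiset.eq_of_le_of_card_le hle (f.card_roots'.trans hcard)
  rw [prod_eq_multiset_prod, heq]
  exact prod_multiset_X_sub_C_of_monic_of_roots_card_eq hf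
    (le_antisymm f.card_roots' (heq ▸ hcard))

end Roots

section SumXPow

variable {R : Type*} [CommSemiring R] [Nontrivial R] {e : ℕ → ℕ}

lemma degree_sum_range_X_pow_lt (he : StrictMono e) (n : ℕ) :
    (∑ i ∈ range n, (X : R[X]) ^ e i).degree < e n := by
  refine (degree_sum_le _ _).trans_lt <| (Finset.sup_lt_iff (WithBot.bot_lt_coe _)).2 fun i hi => ?_
  rw [degree_X_pow]
  exact_mod_cast he (mem_range.mp hi)

lemma monic_sum_range_succ_X_pow (he : StrictMono e) (n : ℕ) :
    (∑ i ∈ range (n + 1), (X : R[X]) ^ e i).Monic := by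
  rw [sum_range_succ, add_comm]
  exact monic_X_pow_add (degree_sum_range_X_pow_lt he n)

lemma natDegree_sum_range_succ_X_pow (he : StrictMono e) (n : ℕ) :
    (∑ i ∈ range (n + 1), (X : R[X]) ^ e i).natDegree = e n := by
  rw [sum_range_succ, natDegree_add_eq_right_of_degree_lt, natDegree_X_pow]
  rw [degree_X_pow]
  exact degree_sum_range_X_pow_lt he n

end SumXPow

section FiniteField

variable {F : Type*} [Field F] {q : ℕ}

lemma card_filter_pow_eq_self_le [Fintype F] [DecidableEq F] (hq : 1 < q) :
    #{w : F | w ^ q = w} ≤ q := by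
  have h := card_filter_eval_eq_le_natDegree (X ^ q - X : F[X])
    (by rw [FiniteField.X_pow_card_sub_X_natDegree_eq F hq]; omega) univ 0
  simpa only [eval_sub, eval_pow, eval_X, sub_eq_zero,
    FiniteField.X_pow_card_sub_X_natDegree_eq F hq] using h

lemma card_filter_pow_sub_self_pow_eq_le [DecidableEq F] (hq : 1 < q) (s : Finset F) (u : F) :
    #{w ∈ s | (w ^ q - w) ^ (q - 1) = u} ≤ q * (q - 1) := by
  have hdeg : ((X ^ q - X : F[X]) ^ (q - 1)).natDegree = q * (q - 1) := by
    rw [natDegree_pow, FiniteField.X_pow_card_sub_X_natDegree_eq F hq, mul_comm]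
  have h := card_filter_eval_eq_le_natDegree ((X ^ q - X : F[X]) ^ (q - 1))
    (by rw [hdeg]; exact Nat.mul_pos (by omega) (by omega)) s u
  simpa only [eval_pow, eval_sub, eval_X, hdeg] using h

lemma geomSum_le_card_image_pow_sub_self_pow [Fintype F] [DecidableEq F] (hq : 1 < q) {n : ℕ}
    (hF : Fintype.card F = q ^ (n + 1)) :
    ∑ j ∈ range n, q ^ j ≤ #(image (fun w => (w ^ q - w) ^ (q - 1)) {w : F | w ^ q ≠ w}) := by
  have hS : q ^ (n + 1) - q ≤ #{w : F | w ^ q ≠ w} := by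
    have := card_filter_add_card_filter_not (s := univ) (fun w : F => w ^ q = w)
    simp only [card_univ, hF, ← ne_eq] at this
    have := card_filter_pow_eq_self_le (F := F) hq
    omega
  have hfib := card_le_mul_card_image {w : F | w ^ q ≠ w} (q * (q - 1))
    fun u _ => card_filter_pow_sub_self_pow_eq_le hq _ u
  have hgeom : q ^ (n + 1) - q = q * (q - 1) * ∑ j ∈ range n, q ^ j := by
    rw [pow_succ', ← Nat.sub_one_mul_geomSum_add_one (by omega : 0 < q) n]
    ring_nf; omega
  exact Nat.le_of_mul_le_mul_left (hgeom ▸ hS.trans hfib) (Nat.mul_pos (by omega) (by omega))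

lemma isRoot_sum_X_pow_geomSum [Fintype F] {p m n : ℕ} [ExpChar F p] (hq : q = p ^ m)
    (hF : Fintype.card F = q ^ n) {w : F} (hw : w ^ q ≠ w) :
    (∑ i ∈ range n, (X : F[X]) ^ ∑ j ∈ range i, q ^ j).IsRoot ((w ^ q - w) ^ (q - 1)) := by
  have h := pow_sub_self_mul_sum_pow_geomSum hq w n
  rw [← hF, FiniteField.pow_card, sub_self] at h
  simpa [IsRoot, eval_finsetSum] using (mul_eq_zero.mp h).resolve_left (sub_ne_zero.mpr hw)

end FiniteField

theorem stmt_10_general (q : ℕ)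
    (n : ℕ) (F : Type) [Field F] [Fintype F] [DecidableEq F]
    (hF : Fintype.card F = q ^ n) :
    ∏ u ∈ Finset.image (fun w : F => (w ^ q - w) ^ (q - 1))
        (Finset.univ.filter fun w : F => w ^ q ≠ w), (X - C u) =
      ∑ i ∈ Finset.range n, (X : F[X]) ^ ((q ^ i - 1) / (q - 1)) := by
  obtain ⟨p, _, k, hp, hcard⟩ := FiniteField.card' F
  have hqn : 1 < q ^ n := hF ▸ Fintype.one_lt_card
  obtain ⟨n, rfl⟩ : ∃ n', n = n' + 1 :=
    Nat.exists_eq_succ_of_ne_zero (by rintro rfl; simp at hqn)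
  have hq : 1 < q := (Nat.one_lt_pow_iff n.succ_ne_zero).1 hqn
  obtain ⟨m, -, hqp⟩ :=
    (Nat.dvd_prime_pow hp).1 (hcard ▸ hF ▸ dvd_pow_self q n.succ_ne_zero)
  have := ExpChar.prime (R := F) hp
  have hmono : StrictMono fun i => ∑ j ∈ range i, q ^ j := strictMono_nat_of_lt_succ fun i => by
    rw [sum_range_succ]
    exact Nat.lt_add_of_pos_right (by positivity)
  simp_rw [← Nat.geomSum_eq hq]
  refine prod_X_sub_C_eq_of_monic (monic_sum_range_succ_X_pow hmono n) (fun u hu => ?_) ?_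
  · obtain ⟨w, hw, rfl⟩ := mem_image.mp hu
    exact isRoot_sum_X_pow_geomSum hqp hF (mem_filter.mp hw).2
  · rw [natDegree_sum_range_succ_X_pow hmono]
    exact geomSum_le_card_image_pow_sub_self_pow hq hF

/-- Lemma 8.4: `∏_{u ∈ Δ} (Y - u) = Σ_{i=1}^n Y^{(q^{i-1}-1)/(q-1)}` where
`Δ = {(w^q - w)^{q-1} : w ∈ F_{q^n} \ F_q}`. -/
theorem stmt_10 (p m : ℕ) (hp : p.Prime) (hm : 0 < m) (q : ℕ) (hq : q = p ^ m)
    (n : ℕ) (hn : 0 < n) (F : Type) [Field F] [Fintype F] [DecidableEq F]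
    (hF : Fintype.card F = q ^ n) :
    ∏ u ∈ Finset.image (fun w : F => (w ^ q - w) ^ (q - 1))
        (Finset.univ.filter fun w : F => w ^ q ≠ w), (X - C u) =
      ∑ i ∈ Finset.range n, (X : F[X]) ^ ((q ^ i - 1) / (q - 1)) :=
  stmt_10_general q n F hF
end

section
/- Let q be a prime power and n a positive integer, and let Δ be the set of all elements (w^q - w)^{q-1} with w ∈ F_{q^n} \ F_q. Then in F_{q^n}[Y] one has ∏_{z ∈ F_{q^n}} (Y - (z+1)z^{q-1}) = Y^2 · ((Y^{q^n-1} - 1)/(Y^{(q^n-1)/(q-1)} - 1)) · ∏_{u ∈ Δ} (Y - u)^q. -/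
/-!
Write `f z = (z + 1) z^(q-1)`, `N = q^n` and `e = (N - 1)/(q - 1)`. Grouping the factors by
value, `∏_z (Y - f z) = ∏_c (Y - c)^#f⁻¹(c)`, so it suffices to count fibres. The fibre over `0`
is `{0, -1}`. For `c ≠ 0`, `z ↦ z⁻¹` identifies `f⁻¹(c)` with the solutions of `c v^q - v = 1`,
and `v ↦ c v^q - v` is additive. If `c` is not a `(q-1)`-th power, i.e. `c^e ≠ 1`, this map is
injective, so the fibre is a point; these `c` are exactly the roots of `(Y^(N-1) - 1)/(Y^e - 1)`.
If `c = t^(q-1)`, then `z ↦ t/z` identifies `f⁻¹(c)` with the solutions of `w^q - w = t`, which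
are empty or a coset of `F_q`; they are nonempty exactly when `c ∈ Δ`.
-/

open Polynomial Finset

theorem Polynomial.nthRootsFinset_one_subset_of_dvd {R : Type*} [CommRing R] [IsDomain R]
    {d D : ℕ} (hdD : d ∣ D) (hD : 0 < D) :
    nthRootsFinset d (1 : R) ⊆ nthRootsFinset D 1 := by
  obtain ⟨k, rfl⟩ := hdD
  intro c hc
  rw [mem_nthRootsFinset (Nat.pos_of_mul_pos_right hD)] at hc
  rw [mem_nthRootsFinset hD, pow_mul, hc, one_pow]

namespace FiniteField

variable {F : Type*} [Field F] [Fintype F]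

theorem exists_isPrimitiveRoot_of_dvd_card_sub_one {d : ℕ} (hd : d ∣ Fintype.card F - 1) :
    ∃ ζ : F, IsPrimitiveRoot ζ d := by
  classical
  obtain ⟨g, hg⟩ := IsCyclic.exists_ofOrder_eq_natCard (α := Fˣ)
  have hg : IsPrimitiveRoot (g : F) (Fintype.card F - 1) := by
    rw [IsPrimitiveRoot.coe_units_iff, ← Fintype.card_units, ← Nat.card_eq_fintype_card, ← hg]
    exact IsPrimitiveRoot.orderOf g
  obtain ⟨e, he⟩ := hd
  have := Fintype.one_lt_card (α := F)
  exact ⟨g ^ e, hg.pow (by omega) (by rw [he, mul_comm])⟩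

theorem pos_of_dvd_card_sub_one {d : ℕ} (hd : d ∣ Fintype.card F - 1) : 0 < d :=
  Nat.pos_of_dvd_of_pos hd (Nat.sub_pos_of_lt Fintype.one_lt_card)

theorem X_pow_sub_one_eq_prod_nthRootsFinset {d : ℕ} (hd : d ∣ Fintype.card F - 1) :
    (X ^ d - 1 : F[X]) = ∏ ζ ∈ nthRootsFinset d (1 : F), (X - C ζ) :=
  have ⟨_, hζ⟩ := exists_isPrimitiveRoot_of_dvd_card_sub_one hd
  X_pow_sub_one_eq_prod (pos_of_dvd_card_sub_one hd) hζ

theorem card_nthRootsFinset_one_of_dvd {d : ℕ} (hd : d ∣ Fintype.card F - 1) :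
    #(nthRootsFinset d (1 : F)) = d :=
  have ⟨_, hζ⟩ := exists_isPrimitiveRoot_of_dvd_card_sub_one hd
  hζ.card_nthRootsFinset

theorem exists_pow_eq_of_pow_eq_one_s11 {d e : ℕ} (hde : d * e = Fintype.card F - 1) {c : F}
    (hc : c ^ e = 1) : ∃ t : F, t ^ d = c := by
  obtain ⟨ζ, hζ⟩ := exists_isPrimitiveRoot_of_dvd_card_sub_one (F := F) dvd_rfl
  have : NeZero e := ⟨(pos_of_dvd_card_sub_one (Dvd.intro_left d hde)).ne'⟩
  obtain ⟨i, -, rfl⟩ :=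
    (hζ.pow (pos_of_dvd_card_sub_one dvd_rfl) hde.symm).eq_pow_of_pow_eq_one hc
  exact ⟨ζ ^ i, by rw [← pow_mul, mul_comm, pow_mul]⟩

variable [DecidableEq F]

theorem insert_zero_nthRootsFinset_card_sub_one :
    insert 0 (nthRootsFinset (Fintype.card F - 1) (1 : F)) = univ := by
  refine eq_univ_of_forall fun c => ?_
  rw [mem_insert, mem_nthRootsFinset (Nat.sub_pos_of_lt Fintype.one_lt_card)]
  exact or_iff_not_imp_left.mpr (pow_card_sub_one_eq_one c)

theorem prod_univ_eq_mul_prod_nthRootsFinset {M : Type*} [CommMonoid M] (g : F → M) :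
    ∏ c, g c = g 0 * ∏ c ∈ nthRootsFinset (Fintype.card F - 1) (1 : F), g c := by
  rw [← insert_zero_nthRootsFinset_card_sub_one, prod_insert]
  have := Nat.sub_pos_of_lt (Fintype.one_lt_card (α := F))
  simp [mem_nthRootsFinset this, zero_pow this.ne']

theorem X_pow_sub_one_divByMonic_eq_prod_sdiff {d D : ℕ} (hdD : d ∣ D)
    (hD : D ∣ Fintype.card F - 1) :
    (X ^ D - 1 : F[X]) /ₘ (X ^ d - 1) =
      ∏ ζ ∈ nthRootsFinset D (1 : F) \ nthRootsFinset d 1, (X - C ζ) := by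
  have hmonic : (X ^ d - 1 : F[X]).Monic := by
    simpa using monic_X_pow_sub_C (1 : F) (pos_of_dvd_card_sub_one (hdD.trans hD)).ne'
  rw [X_pow_sub_one_eq_prod_nthRootsFinset hD,
    ← prod_sdiff (nthRootsFinset_one_subset_of_dvd hdD (pos_of_dvd_card_sub_one hD)),
    ← X_pow_sub_one_eq_prod_nthRootsFinset (hdD.trans hD), mul_comm,
    mul_divByMonic_cancel_left _ hmonic]

theorem card_filter_pow_eq_self {q : ℕ} (hq : q - 1 ∣ Fintype.card F - 1) :
    #{x : F | x ^ q = x} = q := by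
  have hq1 := pos_of_dvd_card_sub_one hq
  have : ({x : F | x ^ q = x} : Finset F) = insert 0 (nthRootsFinset (q - 1) 1) := by
    ext x
    rw [mem_filter, mem_insert, mem_nthRootsFinset hq1, ← pow_sub_one_mul (by omega : q ≠ 0)]
    rcases eq_or_ne x 0 with rfl | hx
    · simp
    · simp [mul_eq_right₀ hx, hx]
  rw [this, card_insert_of_notMem, card_nthRootsFinset_one_of_dvd hq]
  · omega
  · simp [mem_nthRootsFinset hq1, zero_pow hq1.ne']

end FiniteField

theorem Finset.card_filter_eq_one_of_bijective {α β : Type*} [Fintype α] [DecidableEq β]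
    {g : α → β} (hg : Function.Bijective g) (y : β) : #{x | g x = y} = 1 := by
  obtain ⟨x, rfl⟩ := hg.2 y
  exact card_eq_one.mpr ⟨x, by ext x'; simp [hg.1.eq_iff]⟩

section ArtinSchreier

variable {F : Type*} [Field F] (p k : ℕ) [ExpChar F p]

def twistedArtinSchreier (c : F) : F →+ F :=
  AddMonoidHom.mk' (fun v => c * v ^ p ^ k - v) fun a b => by rw [add_pow_expChar_pow]; ring

@[simp]
theorem twistedArtinSchreier_apply (c v : F) :
    twistedArtinSchreier p k c v = c * v ^ p ^ k - v :=
  rfl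

variable {p k}

theorem twistedArtinSchreier_injective {c : F} (hc : ∀ t : F, t ^ (p ^ k - 1) ≠ c) :
    Function.Injective (twistedArtinSchreier p k c) := by
  refine (injective_iff_map_eq_zero _).mpr fun v hv => by_contra fun hv0 => hc v⁻¹ ?_
  rw [twistedArtinSchreier_apply, sub_eq_zero, ← pow_sub_one_mul (expChar_pow_pos F p k).ne',
    ← mul_assoc, mul_eq_right₀ hv0] at hv
  rw [inv_pow]
  exact (eq_inv_of_mul_eq_one_left hv).symm

variable [Fintype F] [DecidableEq F]

theorem card_filter_mul_pow_sub_self_eq_one {c : F} (hc : ∀ t : F, t ^ (p ^ k - 1) ≠ c) :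
    #{v : F | c * v ^ p ^ k - v = 1} = 1 :=
  card_filter_eq_one_of_bijective
    (Finite.injective_iff_bijective.mp (twistedArtinSchreier_injective hc)) 1

theorem card_filter_pow_sub_self_eq (hq : p ^ k - 1 ∣ Fintype.card F - 1) (w : F) :
    #{x : F | x ^ p ^ k - x = w ^ p ^ k - w} = p ^ k := by
  have := AddMonoidHom.card_fiber_eq_of_mem_range (twistedArtinSchreier p k (1 : F))
    ⟨w, rfl⟩ ⟨0, map_zero _⟩
  simp only [twistedArtinSchreier_apply, one_mul, sub_eq_zero] at this
  rw [this, FiniteField.card_filter_pow_eq_self hq]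

end ArtinSchreier

section Fibers

variable {F : Type*} [Field F] {q : ℕ}

theorem add_one_mul_pow_sub_one_eq_iff (hq : q ≠ 0) {z : F} (hz : z ≠ 0) (c : F) :
    (z + 1) * z ^ (q - 1) = c ↔ c * z⁻¹ ^ q - z⁻¹ = 1 := by
  have hzq : z ^ q = z ^ (q - 1) * z := (pow_sub_one_mul hq z).symm
  have : z ^ (q - 1) ≠ 0 := pow_ne_zero _ hz
  rw [inv_pow, hzq]
  constructor
  · rintro rfl
    field_simp
    ring
  · intro h
    field_simp at h
    linear_combination -h

theorem add_one_mul_pow_sub_one_eq_pow_sub_one_iff (hq : q ≠ 0) {z t : F} (hz : z ≠ 0)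
    (ht : t ≠ 0) : (z + 1) * z ^ (q - 1) = t ^ (q - 1) ↔ (t / z) ^ q - t / z = t := by
  have : (t / z) ^ q - t / z = t * (t ^ (q - 1) * z⁻¹ ^ q - z⁻¹) := by
    rw [div_pow, ← pow_sub_one_mul hq t]
    ring
  rw [add_one_mul_pow_sub_one_eq_iff hq hz, this, mul_eq_left₀ ht]

variable [Fintype F] [DecidableEq F]

theorem card_filter_add_one_mul_pow_sub_one_eq_zero_eq_two (hq : 1 < q) :
    #{z : F | (z + 1) * z ^ (q - 1) = 0} = 2 := by
  have : ({z : F | (z + 1) * z ^ (q - 1) = 0} : Finset F) = {-1, 0} := by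
    ext z
    simp [pow_eq_zero_iff (by omega : q - 1 ≠ 0), add_eq_zero_iff_eq_neg]
  rw [this, card_pair (by simp)]

theorem card_filter_add_one_mul_pow_sub_one_eq (hq : 1 < q) {c : F} (hc : c ≠ 0) :
    #{z : F | (z + 1) * z ^ (q - 1) = c} = #{v : F | c * v ^ q - v = 1} := by
  refine card_equiv (Equiv.inv F) fun z => ?_
  rcases eq_or_ne z 0 with rfl | hz
  · simp [zero_pow (by omega : q ≠ 0), zero_pow (by omega : q - 1 ≠ 0), hc.symm]
  · simpa using add_one_mul_pow_sub_one_eq_iff (by omega) hz c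

theorem card_filter_add_one_mul_pow_sub_one_eq_pow_sub_one (hq : 1 < q) {t : F} (ht : t ≠ 0) :
    #{z : F | (z + 1) * z ^ (q - 1) = t ^ (q - 1)} = #{w : F | w ^ q - w = t} := by
  refine card_nbij' (t / ·) (t / ·) (fun z hz => ?_) (fun w hw => ?_)
    (fun z _ => div_div_cancel₀ ht) (fun w _ => div_div_cancel₀ ht)
  · simp only [coe_filter, mem_univ, true_and, Set.mem_ofPred_eq] at hz ⊢
    have hz0 : z ≠ 0 := by
      rintro rfl
      rw [zero_add, one_mul, zero_pow (by omega)] at hz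
      exact pow_ne_zero _ ht hz.symm
    exact (add_one_mul_pow_sub_one_eq_pow_sub_one_iff (by omega) hz0 ht).mp hz
  · simp only [coe_filter, mem_univ, true_and, Set.mem_ofPred_eq] at hw ⊢
    have hw0 : w ≠ 0 := by
      rintro rfl
      rw [zero_pow (by omega), sub_zero] at hw
      exact ht hw.symm
    rwa [add_one_mul_pow_sub_one_eq_pow_sub_one_iff (by omega) (div_ne_zero ht hw0) ht,
      div_div_cancel₀ ht]

end Fibers

section Multiplicities

variable {F : Type*} [Field F] [Fintype F] [DecidableEq F] {p k : ℕ} [ExpChar F p]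

theorem card_filter_add_one_mul_pow_sub_one_eq_one (hq : 1 < p ^ k) {c : F}
    (hc : ∀ t : F, t ^ (p ^ k - 1) ≠ c) : #{z : F | (z + 1) * z ^ (p ^ k - 1) = c} = 1 := by
  have hc0 : c ≠ 0 := fun h => hc 0 (by rw [h, zero_pow (by omega)])
  rw [card_filter_add_one_mul_pow_sub_one_eq hq hc0, card_filter_mul_pow_sub_self_eq_one hc]

theorem card_filter_add_one_mul_pow_sub_one_eq_artinSchreier_pow
    (hq : p ^ k - 1 ∣ Fintype.card F - 1) {w : F} (hw : w ^ p ^ k ≠ w) :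
    #{z : F | (z + 1) * z ^ (p ^ k - 1) = (w ^ p ^ k - w) ^ (p ^ k - 1)} = p ^ k := by
  have := FiniteField.pos_of_dvd_card_sub_one hq
  rw [card_filter_add_one_mul_pow_sub_one_eq_pow_sub_one (by omega) (sub_ne_zero.mpr hw),
    card_filter_pow_sub_self_eq hq]

theorem prod_sdiff_nthRootsFinset_pow_card_filter {e : ℕ}
    (he : (p ^ k - 1) * e = Fintype.card F - 1) :
    ∏ c ∈ nthRootsFinset (Fintype.card F - 1) (1 : F) \ nthRootsFinset e 1,
        (X - C c) ^ #{z : F | (z + 1) * z ^ (p ^ k - 1) = c} =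
      ∏ c ∈ nthRootsFinset (Fintype.card F - 1) (1 : F) \ nthRootsFinset e 1, (X - C c) := by
  have hN := Nat.sub_pos_of_lt (Fintype.one_lt_card (α := F))
  have hq1 := FiniteField.pos_of_dvd_card_sub_one (Dvd.intro e he)
  have he0 := FiniteField.pos_of_dvd_card_sub_one (Dvd.intro_left _ he)
  refine prod_congr rfl fun c hc => ?_
  rw [card_filter_add_one_mul_pow_sub_one_eq_one (by omega) ?_, pow_one]
  rintro t rfl
  obtain ⟨hc1, hc2⟩ := mem_sdiff.mp hc
  rw [mem_nthRootsFinset he0, ← pow_mul, he] at hc2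
  have ht : t = 0 := not_imp_comm.mp (FiniteField.pow_card_sub_one_eq_one t) hc2
  rw [ht, mem_nthRootsFinset hN, zero_pow hq1.ne', zero_pow hN.ne'] at hc1
  exact zero_ne_one hc1

theorem prod_nthRootsFinset_pow_card_filter {e : ℕ}
    (he : (p ^ k - 1) * e = Fintype.card F - 1) :
    ∏ c ∈ nthRootsFinset e (1 : F), (X - C c) ^ #{z : F | (z + 1) * z ^ (p ^ k - 1) = c} =
      ∏ u ∈ image (fun w : F => (w ^ p ^ k - w) ^ (p ^ k - 1)) {w | w ^ p ^ k ≠ w},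
        (X - C u) ^ p ^ k := by
  have hq : p ^ k - 1 ∣ Fintype.card F - 1 := Dvd.intro e he
  have hq1 := FiniteField.pos_of_dvd_card_sub_one hq
  have he0 := FiniteField.pos_of_dvd_card_sub_one (Dvd.intro_left _ he)
  symm
  refine prod_subset_one_on_sdiff ?_ (fun c hc => ?_) (fun u hu => ?_)
  · intro u hu
    obtain ⟨w, hw, rfl⟩ := mem_image.mp hu
    rw [mem_nthRootsFinset he0, ← pow_mul, he,
      FiniteField.pow_card_sub_one_eq_one _ (sub_ne_zero.mpr (mem_filter.mp hw).2)]
  · obtain ⟨hce, hcΔ⟩ := mem_sdiff.mp hc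
    rw [mem_nthRootsFinset he0] at hce
    obtain ⟨t, rfl⟩ := FiniteField.exists_pow_eq_of_pow_eq_one_s11 he hce
    have ht : t ≠ 0 := by
      rintro rfl
      rw [zero_pow (by omega), zero_pow he0.ne'] at hce
      exact zero_ne_one hce
    suffices #{z : F | (z + 1) * z ^ (p ^ k - 1) = t ^ (p ^ k - 1)} = 0 by rw [this, pow_zero]
    rw [card_filter_add_one_mul_pow_sub_one_eq_pow_sub_one (by omega) ht, card_eq_zero,
      filter_eq_empty_iff]
    rintro w - hw
    have hw' : w ^ p ^ k ≠ w := fun hw' => ht (by rw [← hw, hw', sub_self])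
    exact hcΔ (mem_image.mpr ⟨w, mem_filter.mpr ⟨mem_univ w, hw'⟩, by rw [hw]⟩)
  · obtain ⟨w, hw, rfl⟩ := mem_image.mp hu
    rw [card_filter_add_one_mul_pow_sub_one_eq_artinSchreier_pow hq (mem_filter.mp hw).2]

end Multiplicities

theorem stmt_11_general (p m : ℕ) (hp : p.Prime) (hm : 0 < m) (q : ℕ) (hq : q = p ^ m)
    (n : ℕ) (F : Type) [Field F] [Fintype F] [DecidableEq F]
    (hF : Fintype.card F = q ^ n) :
    ∏ z ∈ (Finset.univ : Finset F), (X - C ((z + 1) * z ^ (q - 1))) =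
      X ^ 2 * ((X ^ (q ^ n - 1) - 1) /ₘ (X ^ ((q ^ n - 1) / (q - 1)) - 1)) *
        ∏ u ∈ Finset.image (fun w : F => (w ^ q - w) ^ (q - 1))
            (Finset.univ.filter fun w : F => w ^ q ≠ w), (X - C u) ^ q := by
  subst hq
  have : Fact p.Prime := ⟨hp⟩
  have : CharP F p := charP_of_card_eq_prime_pow (f := m * n) (by rw [hF, pow_mul])
  have hq : 1 < p ^ m := Nat.one_lt_pow hm.ne' hp.one_lt
  obtain ⟨e, he⟩ : p ^ m - 1 ∣ Fintype.card F - 1 := hF ▸ Nat.sub_one_dvd_pow_sub_one _ n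
  replace he := he.symm
  have hediv : (Fintype.card F - 1) / (p ^ m - 1) = e := by
    rw [← he, Nat.mul_div_cancel_left _ (by omega)]
  have hedvd : e ∣ Fintype.card F - 1 := Dvd.intro_left _ he
  rw [← hF, hediv, ← prod_fiberwise' univ _ fun c => X - C c]
  simp_rw [prod_const]
  rw [FiniteField.prod_univ_eq_mul_prod_nthRootsFinset,
    ← prod_sdiff (nthRootsFinset_one_subset_of_dvd hedvd (Nat.sub_pos_of_lt Fintype.one_lt_card)),
    card_filter_add_one_mul_pow_sub_one_eq_zero_eq_two hq,
    prod_sdiff_nthRootsFinset_pow_card_filter he, prod_nthRootsFinset_pow_card_filter he,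
    FiniteField.X_pow_sub_one_divByMonic_eq_prod_sdiff hedvd dvd_rfl, map_zero, sub_zero, mul_assoc]

/-- Corollary 8.3 (Cusick–Müller): `∏_{z ∈ F_{q^n}} (Y - (z+1)z^{q-1}) =
Y² ((Y^{q^n-1}-1)/(Y^{(q^n-1)/(q-1)}-1)) ∏_{u ∈ Δ} (Y - u)^q`, where
`Δ = {(w^q - w)^{q-1} : w ∈ F_{q^n} \ F_q}` and the quotient is exact (`/ₘ`). -/
theorem stmt_11 (p m : ℕ) (hp : p.Prime) (hm : 0 < m) (q : ℕ) (hq : q = p ^ m)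
    (n : ℕ) (hn : 0 < n) (F : Type) [Field F] [Fintype F] [DecidableEq F]
    (hF : Fintype.card F = q ^ n) :
    ∏ z ∈ (Finset.univ : Finset F), (X - C ((z + 1) * z ^ (q - 1))) =
      X ^ 2 * ((X ^ (q ^ n - 1) - 1) /ₘ (X ^ ((q ^ n - 1) / (q - 1)) - 1)) *
        ∏ u ∈ Finset.image (fun w : F => (w ^ q - w) ^ (q - 1))
            (Finset.univ.filter fun w : F => w ^ q ≠ w), (X - C u) ^ q :=
  stmt_11_general p m hp hm q hq n F hF
end

section
/- Let q = 2^k and Q = 2^ℓ with k, ℓ positive integers, and let m = 2^{min(ord_2(k), ord_2(ℓ))}. For α ∈ F_q, let β = Tr_{F_q/F_{2^m}}(Tr_{F_Q/F_2}(α)), where Tr_{F_Q/F_2}(X) denotes the polynomial X + X^2 + X^4 + ... + X^{Q/2} evaluated at α. Then: (1) if ord_2(k) < ord_2(ℓ) then β = 0; (2) if ord_2(k) ≥ ord_2(ℓ) then β = Tr_{F_q/F_2}(α). -/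
/-!
Write `f n = α ^ 2 ^ n`; since `α ^ q = α`, `f` is periodic of period `k`, and
`β = ∑_{i < k/m} ∑_{j < ℓ} f (m i + j)`. Cutting the inner sum into `ℓ/m` blocks of length `m`
and using periodicity, every block contributes a full sum over one period, so
`β = (ℓ/m) • Tr_{F_q/F_2}(α)`. In characteristic `2` only the parity of `ℓ/m` matters, and
`ℓ/m` is even exactly when `ord₂ k < ord₂ ℓ`.
-/

open Finset

theorem Finset.sum_range_mul_eq_sum_sum {M : Type*} [AddCommMonoid M] (f : ℕ → M) (m c : ℕ) :
    ∑ j ∈ range (m * c), f j = ∑ t ∈ range c, ∑ u ∈ range m, f (m * t + u) := by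
  induction c with
  | zero => simp
  | succ c ih => rw [Nat.mul_succ, sum_range_add, ih, sum_range_succ]

namespace Function.Periodic

variable {M : Type*} [AddCommMonoid M]

theorem sum_range_add {g : ℕ → M} {N : ℕ} (hg : Periodic g N) (t : ℕ) :
    ∑ i ∈ range N, g (i + t) = ∑ i ∈ range N, g i := by
  induction t with
  | zero => rfl
  | succ t ih =>
    rw [← ih]
    obtain _ | n := N
    · simp
    · have hwrap : g (n + (t + 1)) = g (0 + t) := by
        rw [zero_add, ← hg t]; congr 1; omega
      rw [sum_range_succ, hwrap, sum_range_succ' (fun i => g (i + t))]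
      simp_rw [add_right_comm _ 1 t, add_assoc]

theorem sum_sum_range_mul_add {f : ℕ → M} {m N : ℕ} (hf : Periodic f (m * N)) (c : ℕ) :
    ∑ i ∈ range N, ∑ j ∈ range (m * c), f (m * i + j) = c • ∑ j ∈ range (m * N), f j := by
  set G : ℕ → M := fun n => ∑ u ∈ range m, f (m * n + u)
  have hG : Periodic G N := fun n => by
    simp only [G, mul_add, add_right_comm _ (m * N), hf _]
  have hblocks : ∀ i, ∑ j ∈ range (m * c), f (m * i + j) = ∑ t ∈ range c, G (i + t) := by
    intro i
    rw [sum_range_mul_eq_sum_sum]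
    refine sum_congr rfl fun t _ => sum_congr rfl fun u _ => ?_
    rw [mul_add, add_assoc]
  calc ∑ i ∈ range N, ∑ j ∈ range (m * c), f (m * i + j)
      = ∑ t ∈ range c, ∑ i ∈ range N, G (i + t) := by simp_rw [hblocks]; exact sum_comm
    _ = c • ∑ i ∈ range N, G i := by simp_rw [hG.sum_range_add, sum_const, card_range]
    _ = c • ∑ j ∈ range (m * N), f j := by rw [sum_range_mul_eq_sum_sum]

end Function.Periodic

section Frobenius

variable {R : Type*} [CommSemiring R] (p : ℕ) [ExpChar R p]

theorem sum_range_pow_char_pow_pow_char_pow (x : R) (ℓ n : ℕ) :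
    (∑ j ∈ range ℓ, x ^ p ^ j) ^ p ^ n = ∑ j ∈ range ℓ, x ^ p ^ (n + j) := by
  rw [sum_pow_char_pow]
  simp_rw [← pow_mul, ← pow_add, add_comm]

theorem sum_range_div_trace_pow_eq_nsmul_trace {x : R} {k ℓ m : ℕ} (hx : x ^ p ^ k = x)
    (hmk : m ∣ k) (hml : m ∣ ℓ) :
    ∑ i ∈ range (k / m), (∑ j ∈ range ℓ, x ^ p ^ j) ^ (p ^ m) ^ i =
      (ℓ / m) • ∑ j ∈ range k, x ^ p ^ j := by
  obtain ⟨N, rfl⟩ := hmk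
  obtain ⟨c, rfl⟩ := hml
  rcases m.eq_zero_or_pos with rfl | hm
  · simp
  have hper : Function.Periodic (fun n => x ^ p ^ n) (m * N) := fun n => by
    dsimp only
    rw [pow_add, mul_comm, pow_mul, hx]
  rw [Nat.mul_div_cancel_left _ hm, Nat.mul_div_cancel_left _ hm]
  simp_rw [← pow_mul, sum_range_pow_char_pow_pow_char_pow]
  exact hper.sum_sum_range_mul_add c

end Frobenius

theorem dvd_div_pow_iff_lt_padicValNat {p ℓ e : ℕ} [Fact p.Prime] (hℓ : ℓ ≠ 0)
    (he : e ≤ padicValNat p ℓ) : p ∣ ℓ / p ^ e ↔ e < padicValNat p ℓ := by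
  rw [Nat.dvd_div_iff_mul_dvd ((padicValNat_dvd_iff_le hℓ).mpr he), ← pow_succ,
    padicValNat_dvd_iff_le hℓ, Nat.succ_le_iff]

theorem stmt_13_general (k ℓ : ℕ) (hl : 0 < ℓ) (q m : ℕ)
    (hq : q = 2 ^ k)
    (hm : m = 2 ^ min (padicValNat 2 k) (padicValNat 2 ℓ))
    (F : Type) [Field F] [Fintype F] (hF : Fintype.card F = q) (α : F) :
    (padicValNat 2 k < padicValNat 2 ℓ →
      ∑ i ∈ Finset.range (k / m), (∑ j ∈ Finset.range ℓ, α ^ 2 ^ j) ^ (2 ^ m) ^ i = 0) ∧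
    (padicValNat 2 ℓ ≤ padicValNat 2 k →
      ∑ i ∈ Finset.range (k / m), (∑ j ∈ Finset.range ℓ, α ^ 2 ^ j) ^ (2 ^ m) ^ i =
        ∑ j ∈ Finset.range k, α ^ 2 ^ j) := by
  have : CharP F 2 := charP_of_card_eq_prime_pow (hF.trans hq)
  have hα : α ^ 2 ^ k = α := by rw [← hq, ← hF]; exact FiniteField.pow_card α
  have hmk : m ∣ k := hm ▸ (pow_dvd_pow 2 (min_le_left _ _)).trans pow_padicValNat_dvd
  have hml : m ∣ ℓ := hm ▸ (pow_dvd_pow 2 (min_le_right _ _)).trans pow_padicValNat_dvd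
  have hparity : Even (ℓ / m) ↔ padicValNat 2 k < padicValNat 2 ℓ := by
    rw [even_iff_two_dvd, hm, dvd_div_pow_iff_lt_padicValNat hl.ne' (min_le_right _ _),
      min_lt_iff, lt_self_iff_false, or_false]
  rw [sum_range_div_trace_pow_eq_nsmul_trace 2 hα hmk hml, nsmul_eq_mul, CharTwo.natCast_eq_ite]
  refine ⟨fun hlt => ?_, fun hle => ?_⟩
  · rw [if_pos (hparity.mpr hlt), zero_mul]
  · rw [if_neg (by rwa [hparity, not_lt]), one_mul]

/-- Lemma 6.3: with `q = 2^k`, `Q = 2^ℓ`, `m = 2^{min(ord₂ k, ord₂ ℓ)}` and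
`β = Tr_{F_q/F_{2^m}}(Tr_{F_Q/F_2}(α))` (traces written as polynomial expressions),
if `ord₂ k < ord₂ ℓ` then `β = 0`, and if `ord₂ k ≥ ord₂ ℓ` then `β = Tr_{F_q/F_2}(α)`. -/
theorem stmt_13 (k ℓ : ℕ) (hk : 0 < k) (hl : 0 < ℓ) (q Q m : ℕ)
    (hq : q = 2 ^ k) (hQ : Q = 2 ^ ℓ)
    (hm : m = 2 ^ min (padicValNat 2 k) (padicValNat 2 ℓ))
    (F : Type) [Field F] [Fintype F] (hF : Fintype.card F = q) (α : F) :
    (padicValNat 2 k < padicValNat 2 ℓ →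
      ∑ i ∈ Finset.range (k / m), (∑ j ∈ Finset.range ℓ, α ^ 2 ^ j) ^ (2 ^ m) ^ i = 0) ∧
    (padicValNat 2 ℓ ≤ padicValNat 2 k →
      ∑ i ∈ Finset.range (k / m), (∑ j ∈ Finset.range ℓ, α ^ 2 ^ j) ^ (2 ^ m) ^ i =
        ∑ j ∈ Finset.range k, α ^ 2 ^ j) :=
  stmt_13_general k ℓ hl q m hq hm F hF α
end

section
/- Let q be a prime power and let w ∈ F_{q^n} \ F_q, and set u = (w^q - w)^{q-1}. Then Σ_{i=1}^{n} u^{(q^{i-1}-1)/(q-1)} = 0. -/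
/-!
With `v = w ^ q - w`, the exponent `(q ^ i - 1) / (q - 1)` turns the `i`-th term into
`v ^ (q ^ i - 1)`. Since `q` is a power of the characteristic, `v ^ q ^ i = w ^ q ^ (i + 1) - w ^ q ^ i`,
so `v` times the sum telescopes to `w ^ q ^ n - w`, which vanishes in a field with `q ^ n` elements.
-/

open Finset

theorem pow_sub_one_pow_div_sub_one {M : Type*} [Monoid M] (v : M) (q i : ℕ) :
    (v ^ (q - 1)) ^ ((q ^ i - 1) / (q - 1)) = v ^ (q ^ i - 1) := by
  have hdvd : q - 1 ∣ q ^ i - 1 := by simpa only [one_pow] using Nat.sub_dvd_pow_sub_pow q 1 i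
  rw [← pow_mul, Nat.mul_div_cancel' hdvd]

section ExpChar

variable {R : Type*} [CommRing R] (p : ℕ) [ExpChar R p]

theorem sub_pow_expChar_pow_pow (w : R) (m i : ℕ) :
    (w ^ p ^ m - w) ^ (p ^ m) ^ i = w ^ (p ^ m) ^ (i + 1) - w ^ (p ^ m) ^ i := by
  rw [← pow_mul p m i, sub_pow_expChar_pow, ← pow_mul w, pow_mul p m i, ← pow_succ']

theorem mul_sum_pow_expChar_pow_sub_one (w : R) (m n : ℕ) :
    (w ^ p ^ m - w) * ∑ i ∈ range n, (w ^ p ^ m - w) ^ ((p ^ m) ^ i - 1) = w ^ (p ^ m) ^ n - w := by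
  have hq : 1 ≤ p ^ m := Nat.one_le_pow _ _ (expChar_pos R p)
  rw [mul_sum]
  calc ∑ i ∈ range n, (w ^ p ^ m - w) * (w ^ p ^ m - w) ^ ((p ^ m) ^ i - 1)
      = ∑ i ∈ range n, (w ^ (p ^ m) ^ (i + 1) - w ^ (p ^ m) ^ i) := by
        refine sum_congr rfl fun i _ => ?_
        rw [← pow_succ', Nat.sub_add_cancel (Nat.one_le_pow _ _ hq),
          sub_pow_expChar_pow_pow]
    _ = w ^ (p ^ m) ^ n - w := by
        rw [sum_range_sub (fun i => w ^ (p ^ m) ^ i), pow_zero, pow_one]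

end ExpChar

theorem stmt_14_general (p m : ℕ) (hp : p.Prime) (q : ℕ) (hq : q = p ^ m)
    (n : ℕ) (F : Type) [Field F] [Fintype F]
    (hF : Fintype.card F = q ^ n) (w : F) (hw : w ^ q ≠ w) :
    ∑ i ∈ Finset.range n, ((w ^ q - w) ^ (q - 1)) ^ ((q ^ i - 1) / (q - 1)) = 0 := by
  have := Fact.mk hp
  have : CharP F p := charP_of_card_eq_prime_pow (f := m * n) (by rw [hF, hq, pow_mul])
  have hfix : w ^ q ^ n = w := hF ▸ FiniteField.pow_card w
  simp_rw [pow_sub_one_pow_div_sub_one]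
  subst hq
  refine (mul_eq_zero.mp ?_).resolve_left (sub_ne_zero.mpr hw)
  rw [mul_sum_pow_expChar_pow_sub_one p, hfix, sub_self]

/-- From the proof of Lemma 8.4: for `w ∈ F_{q^n} \ F_q` and `u = (w^q - w)^{q-1}`,
one has `Σ_{i=1}^n u^{(q^{i-1}-1)/(q-1)} = 0`. -/
theorem stmt_14 (p m : ℕ) (hp : p.Prime) (hm : 0 < m) (q : ℕ) (hq : q = p ^ m)
    (n : ℕ) (hn : 0 < n) (F : Type) [Field F] [Fintype F]
    (hF : Fintype.card F = q ^ n) (w : F) (hw : w ^ q ≠ w) :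
    ∑ i ∈ Finset.range n, ((w ^ q - w) ^ (q - 1)) ^ ((q ^ i - 1) / (q - 1)) = 0 :=
  stmt_14_general p m hp q hq n F hF w hw
end

section
/- Let q be a prime power and f(X) ∈ F_{q^2}[X]. Suppose γ ∈ μ_{q+1} and that s is an integer with s ≡ 0 (mod q+1). If g(X) = X^s (α^q X^t - 1)/(X^t - α) with gcd(t, q+1) = 1 and α ∈ F_{q^2}^* \ μ_{q+1}, then for every β ∈ μ_{q+1}, g(β) lies in μ_{q+1}. -/
/-!
For `y` with `y ^ (q + 1) = 1` we have `y ^ q = y⁻¹`, and `z ↦ z ^ q` is the nontrivial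
automorphism of `F_{q²}`. Hence `(α ^ q y - 1) ^ (q + 1) = (α y ^ q - 1)(α ^ q y - 1)` and
`(y - α) ^ (q + 1) = (y ^ q - α ^ q)(y - α)` agree, both being `α ^ (q + 1) + 1 - α y ^ q - α ^ q y`.
Since `β ^ s = 1` and `β ^ t` is again a `(q + 1)`-th root of unity, this is the claim for `g(β)`.
-/

namespace FiniteField

variable {F : Type*} [Field F] [Fintype F] {q : ℕ}

theorem pow_pow_two_of_card_eq_sq (hF : Fintype.card F = q ^ 2) (a : F) : a ^ q ^ 2 = a := by
  rw [← hF, pow_card]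

/-- `q` is a power of the characteristic, so `x ↦ x ^ q` is an iterated Frobenius. -/
theorem sub_pow_of_card_eq_sq (hF : Fintype.card F = q ^ 2) (a b : F) :
    (a - b) ^ q = a ^ q - b ^ q := by
  obtain ⟨p, _, k, hp, hk⟩ := card' F
  have hq : q ∣ p ^ (k : ℕ) := hk ▸ hF ▸ dvd_pow_self q two_ne_zero
  obtain ⟨i, -, rfl⟩ := (Nat.dvd_prime_pow hp).mp hq
  have : Fact p.Prime := ⟨hp⟩
  exact sub_pow_char_pow a b i

theorem pow_succ_div_sub_eq_one_of_card_eq_sq (hF : Fintype.card F = q ^ 2) {α y : F}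
    (hy : y ^ (q + 1) = 1) (hα : α ^ (q + 1) ≠ 1) :
    ((α ^ q * y - 1) / (y - α)) ^ (q + 1) = 1 := by
  have hD : y - α ≠ 0 := fun h => hα (sub_eq_zero.mp h ▸ hy)
  have hyq : y ^ q * y = 1 := by rw [← pow_succ, hy]
  have hαq : (α ^ q) ^ q = α := by rw [← pow_mul, ← sq, pow_pow_two_of_card_eq_sq hF]
  rw [div_pow, div_eq_one_iff_eq (pow_ne_zero _ hD), pow_succ, pow_succ,
    sub_pow_of_card_eq_sq hF, sub_pow_of_card_eq_sq hF, mul_pow, hαq, one_pow]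
  linear_combination (α ^ (q + 1) - 1) * hyq

end FiniteField

theorem stmt_15_general (q : ℕ)
    (F : Type) [Field F] [Fintype F] (hF : Fintype.card F = q ^ 2)
    (s : ℤ) (hs : ((q : ℤ) + 1) ∣ s) (t : ℕ)
    (α : F) (hα : α ^ (q + 1) ≠ 1) :
    ∀ β : F, β ^ (q + 1) = 1 →
      (β ^ s * (α ^ q * β ^ t - 1) / (β ^ t - α)) ^ (q + 1) = 1 := by
  intro β hβ
  have hβs : β ^ s = 1 := by
    obtain ⟨k, rfl⟩ := hs
    rw [zpow_mul, show ((q : ℤ) + 1) = ((q + 1 : ℕ) : ℤ) by push_cast; ring, zpow_natCast, hβ,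
      one_zpow]
  have hβt : (β ^ t) ^ (q + 1) = 1 := by rw [pow_right_comm, hβ, one_pow]
  rw [hβs, one_mul]
  exact FiniteField.pow_succ_div_sub_eq_one_of_card_eq_sq hF hβt hα

/-- Direction of Lemma 4.2: when `s ≡ 0 (mod q+1)`, the map
`g(X) = X^s(α^q X^t - 1)/(X^t - α)` sends every `(q+1)`-th root of unity to a
`(q+1)`-th root of unity. -/
theorem stmt_15 (p n : ℕ) (hp : p.Prime) (hn : 0 < n) (q : ℕ) (hq : q = p ^ n)
    (F : Type) [Field F] [Fintype F] (hF : Fintype.card F = q ^ 2)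
    (f : Polynomial F) (γ : F) (hγ : γ ^ (q + 1) = 1)
    (s : ℤ) (hs : ((q : ℤ) + 1) ∣ s) (t : ℕ) (ht : 0 < t)
    (hgcd : Nat.gcd t (q + 1) = 1) (α : F) (hα0 : α ≠ 0) (hα : α ^ (q + 1) ≠ 1) :
    ∀ β : F, β ^ (q + 1) = 1 →
      (β ^ s * (α ^ q * β ^ t - 1) / (β ^ t - α)) ^ (q + 1) = 1 :=
  stmt_15_general q F hF s hs t α hα
end
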